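/- arXiv:1106.6024 — 8 statements merged into one kernel-verified Lean document; each statement's English description precedes it below -/
import Mathlib

section
/- For any reference vector λ* ∈ ℝ^N and any ε > 0, AdaBoost achieves loss at most L(λ*) + ε in at most 13·‖λ*‖₁⁶·ε⁻⁵ rounds; that is, for every integer t ≥ 13·‖λ*‖₁⁶·ε⁻⁵ one has L(λ^t) ≤ L(λ*) + ε. -/
/-- The exponential loss `L(λ) = (1/m) ∑ᵢ exp(−(Mλ)ᵢ)`. -/
noncomputable def expLoss {m N : ℕ} (M : Matrix (Fin m) (Fin N) ℝ) (lam : Fin N → ℝ) : ℝ :=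
  (1 / (m : ℝ)) * ∑ i, Real.exp (-(M.mulVec lam i))

/-- AdaBoost's distribution `D(i) ∝ exp(−(Mλ)ᵢ)`. -/
noncomputable def wt {m N : ℕ} (M : Matrix (Fin m) (Fin N) ℝ) (lam : Fin N → ℝ) (i : Fin m) : ℝ :=
  Real.exp (-(M.mulVec lam i)) / ∑ i', Real.exp (-(M.mulVec lam i'))

/-- The ℓ₁-norm on `ℝ^N`. -/
noncomputable def l1 {N : ℕ} (v : Fin N → ℝ) : ℝ := ∑ j, |v j|

/-- `lam`, `j`, `r` describe a run of AdaBoost on feature matrix `M`: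
`lam 0 = 0`, and at each round the coordinate `j t` of maximal absolute correlation is
chosen, `r t` is its correlation, and the step is `α_t = ½ ln((1+r_t)/(1−r_t))`. -/
def IsAdaBoost {m N : ℕ} (M : Matrix (Fin m) (Fin N) ℝ)
    (lam : ℕ → Fin N → ℝ) (j : ℕ → Fin N) (r : ℕ → ℝ) : Prop :=
  lam 0 = 0 ∧
  ∀ t : ℕ,
    (∀ j' : Fin N, |∑ i, wt M (lam t) i * M i j'| ≤ |∑ i, wt M (lam t) i * M i (j t)|) ∧
    r t = ∑ i, wt M (lam t) i * M i (j t) ∧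
    lam (t + 1) = lam t + Pi.single (j t) ((1 / 2) * Real.log ((1 + r t) / (1 - r t)))

/-!
Write `R_t = L(λ^t) − L(λ*)` and `B_t = ‖λ* − λ^t‖₁`. Convexity of the loss bounds the
suboptimality by the edge, `R_t ≤ δ_t · L(λ^t) · B_t`, and the step size satisfies
`|α_t| ≤ δ_t / (1 − δ_t²)`, so `B_{t+1} ≤ B_t + δ_t / (1 − δ_t²)`. Combined with the drop
`L(λ^{t+1}) ≤ L(λ^t) √(1 − δ_t²)` this shows, while `R_t > 0`, that the potential `B_t R_t²` does
not increase and that `R_t² ≤ 2 B_t² (R_t − R_{t+1})`. Since `B_0 = ‖λ*‖₁ =: B ≥ R_0`, this gives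
`R_t⁶ ≤ 2 B⁶ (R_t − R_{t+1})`, so `R_t⁻⁵` grows by at least `5 / (2 B⁶)` per round. Hence
`R_t > ε` forces `t < 2 B⁶ / (5 ε⁵)`, well below `13 B⁶ / ε⁵`.
-/

theorem abs_log_one_add_div_one_sub_le {x : ℝ} (hx : |x| < 1) :
    |Real.log ((1 + x) / (1 - x))| ≤ 2 * |x| / (1 - x ^ 2) := by
  have hx2 : x ^ 2 < 1 := by rwa [sq_lt_one_iff_abs_lt_one]
  have hgeom : HasSum (fun k : ℕ => 2 * |x| * (x ^ 2) ^ k) (2 * |x| * (1 - x ^ 2)⁻¹) :=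
    (hasSum_geometric_of_lt_one (sq_nonneg x) hx2).mul_left _
  have hbound : ∀ k : ℕ,
      ‖(2 : ℝ) * (1 / (2 * k + 1)) * x ^ (2 * k + 1)‖ ≤ 2 * |x| * (x ^ 2) ^ k := by
    intro k
    have hk : (1 : ℝ) / (2 * k + 1) ≤ 1 := by
      rw [div_le_one (by positivity)]; linarith [(Nat.cast_nonneg k : (0:ℝ) ≤ k)]
    rw [Real.norm_eq_abs, abs_mul, abs_mul, abs_pow,
      abs_of_pos (by positivity : (0:ℝ) < 1 / (2 * k + 1)), pow_succ, pow_mul, sq_abs]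
    nlinarith [abs_nonneg x, pow_nonneg (sq_nonneg x) k,
      mul_nonneg (pow_nonneg (sq_nonneg x) k) (abs_nonneg x)]
  rw [Real.log_div (by linarith [neg_abs_le x]) (by linarith [le_abs_self x])]
  simpa [div_eq_mul_inv] using
    (Real.hasSum_log_sub_log_of_abs_lt_one hx).norm_le_of_bounded hgeom hbound

theorem inv_pow_add_div_le_inv_pow {x y C : ℝ} (n : ℕ) (hx : 0 < x) (hy : 0 < y) (hC : 0 < C)
    (h : x ^ (n + 1) ≤ C * (x - y)) :
    (x ^ n)⁻¹ + n / C ≤ (y ^ n)⁻¹ := by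
  have hyx : y ≤ x := by nlinarith [pow_pos hx (n + 1)]
  have hratio : x ^ n / C ≤ x / y - 1 := by
    rw [div_sub_one hy.ne', div_le_div_iff₀ hC hy]
    nlinarith [pow_succ x n, pow_pos hx n]
  have hbernoulli := one_add_mul_sub_le_pow (a := x / y) (by linarith [div_pos hx hy]) n
  calc (x ^ n)⁻¹ + n / C = (x ^ n)⁻¹ * (1 + n * (x ^ n / C)) := by field_simp
    _ ≤ (x ^ n)⁻¹ * (1 + n * (x / y - 1)) := by gcongr
    _ ≤ (x ^ n)⁻¹ * (x / y) ^ n := by gcongr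
    _ = (y ^ n)⁻¹ := by rw [div_pow]; field_simp

theorem inv_pow_add_mul_div_le_inv_pow {R : ℕ → ℝ} {C : ℝ} (n t : ℕ) (hC : 0 < C)
    (hR : ∀ s ≤ t, 0 < R s) (hstep : ∀ s < t, R s ^ (n + 1) ≤ C * (R s - R (s + 1))) :
    (R 0 ^ n)⁻¹ + n * t / C ≤ (R t ^ n)⁻¹ := by
  induction t with
  | zero => simp
  | succ t ih =>
    have ih := ih (fun s hs => hR s (by omega)) (fun s hs => hstep s (by omega))
    have h := inv_pow_add_div_le_inv_pow n (hR t (by omega)) (hR (t + 1) le_rfl) hC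
      (hstep t (by omega))
    push_cast
    linarith [show (n : ℝ) * (t + 1) / C = n * t / C + n / C by ring]

theorem mul_pow_five_le_of_potential {R b : ℕ → ℝ} {t : ℕ} (hR : ∀ s ≤ t, 0 < R s)
    (hb : ∀ s, 0 ≤ b s) (h0 : R 0 ≤ b 0)
    (hpot : ∀ s < t, b (s + 1) * R (s + 1) ^ 2 ≤ b s * R s ^ 2)
    (hprog : ∀ s < t, R s ^ 2 ≤ 2 * b s ^ 2 * (R s - R (s + 1))) :
    5 * t * R t ^ 5 ≤ 2 * b 0 ^ 6 := by
  have hpot_le : ∀ s ≤ t, b s * R s ^ 2 ≤ b 0 ^ 3 := by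
    intro s hs
    induction s with
    | zero =>
      have := mul_le_mul_of_nonneg_left (pow_le_pow_left₀ (hR 0 hs).le h0 2) (hb 0)
      linarith [show b 0 * b 0 ^ 2 = b 0 ^ 3 by ring]
    | succ s ih => exact (hpot s (by omega)).trans (ih (by omega))
  have hstep : ∀ s < t, R s ^ (5 + 1) ≤ 2 * b 0 ^ 6 * (R s - R (s + 1)) := by
    intro s hs
    have hRs := hR s hs.le
    have hdec : 0 ≤ R s - R (s + 1) := by nlinarith [hprog s hs, sq_nonneg (b s)]
    have hbR : (b s * R s ^ 2) ^ 2 ≤ (b 0 ^ 3) ^ 2 :=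
      pow_le_pow_left₀ (by have := hb s; positivity) (hpot_le s hs.le) 2
    calc R s ^ (5 + 1) = R s ^ 2 * R s ^ 4 := by ring
      _ ≤ 2 * b s ^ 2 * (R s - R (s + 1)) * R s ^ 4 := by gcongr; exact hprog s hs
      _ = 2 * (b s * R s ^ 2) ^ 2 * (R s - R (s + 1)) := by ring
      _ ≤ 2 * (b 0 ^ 3) ^ 2 * (R s - R (s + 1)) := by gcongr
      _ = 2 * b 0 ^ 6 * (R s - R (s + 1)) := by ring
  have hC : 0 < 2 * b 0 ^ 6 := by have := (hR 0 (Nat.zero_le t)).trans_le h0; positivity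
  have h := inv_pow_add_mul_div_le_inv_pow 5 t hC hR hstep
  have hR0 : 0 < (R 0 ^ 5)⁻¹ := by have := hR 0 (Nat.zero_le t); positivity
  have hcount : 5 * t / (2 * b 0 ^ 6) ≤ 1 / R t ^ 5 := by push_cast at h; rw [one_div]; linarith
  rwa [div_le_div_iff₀ hC (pow_pos (hR t le_rfl) 5), one_mul] at hcount

theorem mul_sq_gap_le_of_drop {L L' Ls δ b b' : ℝ} (hδ0 : 0 ≤ δ) (hδ1 : δ < 1) (hLs : 0 ≤ Ls)
    (hgap : Ls < L') (hdrop : L' ≤ L * √(1 - δ ^ 2)) (hedge : L - Ls ≤ δ * L * b)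
    (hb : b' ≤ b + δ / (1 - δ ^ 2)) :
    b' * (L' - Ls) ^ 2 ≤ b * (L - Ls) ^ 2 := by
  set σ := √(1 - δ ^ 2)
  have hσsq : σ ^ 2 = 1 - δ ^ 2 := Real.sq_sqrt (by nlinarith)
  have hσ0 : 0 < σ := Real.sqrt_pos.mpr (by nlinarith)
  have hσ1 : σ ≤ 1 := Real.sqrt_le_one.mpr (by nlinarith)
  set R := L - Ls
  set R' := L' - Ls
  have hR' : 0 < R' := sub_pos.mpr hgap
  have hRR' : R' ≤ σ * R := by nlinarith
  have hR : 0 < R := pos_of_mul_pos_right (hR'.trans_le hRR') hσ0.le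
  have hdec : (1 - σ) * L ≤ R - R' := by linarith
  have hδb : 0 < δ * b := by nlinarith
  have hδ : 0 < δ := lt_of_le_of_ne hδ0 (by rintro rfl; simp at hδb)
  have hdecR : (1 - σ) * R ≤ δ * b * (R - R') := by nlinarith
  have hsq : δ ^ 2 * R' ^ 2 ≤ (1 - σ) * σ ^ 2 * R * (R + R') := by
    have h1 : R' ^ 2 ≤ σ ^ 2 * R ^ 2 := by nlinarith
    have h2 : σ * R' ^ 2 ≤ σ ^ 2 * (R * R') := by
      nlinarith [mul_le_mul_of_nonneg_left hRR' (mul_pos hσ0 hR').le]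
    have h3 : δ ^ 2 = (1 - σ) * (1 + σ) := by nlinarith
    rw [h3]; nlinarith
  have hkey : δ * R' ^ 2 ≤ σ ^ 2 * (b * (R ^ 2 - R' ^ 2)) := by
    have : δ * (δ * R' ^ 2) ≤ δ * (σ ^ 2 * (b * (R ^ 2 - R' ^ 2))) :=
      calc δ * (δ * R' ^ 2) ≤ σ ^ 2 * (R + R') * ((1 - σ) * R) := by nlinarith
        _ ≤ σ ^ 2 * (R + R') * (δ * b * (R - R')) := by gcongr
        _ = δ * (σ ^ 2 * (b * (R ^ 2 - R' ^ 2))) := by ring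
    exact le_of_mul_le_mul_left this hδ
  have hstep : δ / (1 - δ ^ 2) * R' ^ 2 ≤ b * (R ^ 2 - R' ^ 2) := by
    rw [← hσsq, div_mul_eq_mul_div, div_le_iff₀ (by positivity)]
    linarith
  nlinarith

theorem sq_gap_le_of_drop {L L' Ls δ b : ℝ} (hδ0 : 0 ≤ δ) (hδ1 : δ ≤ 1) (hL1 : L ≤ 1)
    (hLs : 0 ≤ Ls) (hgap : Ls ≤ L) (hdrop : L' ≤ L * √(1 - δ ^ 2))
    (hedge : L - Ls ≤ δ * L * b) :
    (L - Ls) ^ 2 ≤ 2 * b ^ 2 * (L - L') := by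
  have hσ : √(1 - δ ^ 2) ≤ 1 - δ ^ 2 / 2 := Real.sqrt_le_iff.mpr ⟨by nlinarith, by nlinarith⟩
  have hdec : L * δ ^ 2 / 2 ≤ L - L' := by nlinarith
  calc (L - Ls) ^ 2 ≤ (δ * L * b) ^ 2 := pow_le_pow_left₀ (sub_nonneg.mpr hgap) hedge 2
    _ = δ ^ 2 * L * L * b ^ 2 := by ring
    _ ≤ δ ^ 2 * L * 1 * b ^ 2 := by gcongr; nlinarith
    _ ≤ 2 * b ^ 2 * (L - L') := by nlinarith

theorem l1_nonneg {N : ℕ} (v : Fin N → ℝ) : 0 ≤ l1 v :=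
  Finset.sum_nonneg fun _ _ => abs_nonneg _

theorem l1_sub_le {N : ℕ} (v w : Fin N → ℝ) : l1 (v - w) ≤ l1 v + l1 w := by
  rw [l1, l1, l1, ← Finset.sum_add_distrib]
  exact Finset.sum_le_sum fun k _ => abs_sub _ _

theorem l1_single {N : ℕ} (k : Fin N) (a : ℝ) : l1 (Pi.single k a) = |a| := by
  rw [l1, Finset.sum_eq_single k (fun i _ hi => by simp [hi]) (by simp)]
  simp

section ExpLoss
variable {m N : ℕ} {M : Matrix (Fin m) (Fin N) ℝ}

theorem expLoss_pos (hm : 0 < m) (v : Fin N → ℝ) : 0 < expLoss M v :=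
  mul_pos (by positivity) (Finset.sum_pos (fun i _ => Real.exp_pos _) ⟨⟨0, hm⟩, Finset.mem_univ _⟩)

theorem expLoss_zero (hm : 0 < m) : expLoss M 0 = 1 := by
  simp [expLoss, hm.ne']

theorem one_sub_l1_le_expLoss (hm : 0 < m) (hM : ∀ i j, |M i j| ≤ 1) (v : Fin N → ℝ) :
    1 - l1 v ≤ expLoss M v := by
  have hmargin : ∀ i, M.mulVec v i ≤ l1 v := fun i =>
    calc M.mulVec v i = ∑ k, M i k * v k := rfl
      _ ≤ ∑ k, |M i k * v k| := Finset.sum_le_sum fun k _ => le_abs_self _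
      _ ≤ l1 v := Finset.sum_le_sum fun k _ => by
        rw [abs_mul]; exact mul_le_of_le_one_left (abs_nonneg _) (hM i k)
  calc 1 - l1 v = 1 / (m : ℝ) * ∑ _i : Fin m, (1 - l1 v) := by simp; field_simp
    _ ≤ 1 / (m : ℝ) * ∑ i, Real.exp (-(M.mulVec v i)) := by
      gcongr with i
      linarith [Real.add_one_le_exp (-(M.mulVec v i)), hmargin i]

theorem expLoss_mul_wt (v : Fin N → ℝ) (i : Fin m) :
    expLoss M v * wt M v i = 1 / (m : ℝ) * Real.exp (-(M.mulVec v i)) := by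
  have hS : 0 < ∑ i', Real.exp (-(M.mulVec v i')) :=
    Finset.sum_pos (fun i _ => Real.exp_pos _) ⟨i, Finset.mem_univ _⟩
  rw [expLoss, wt]
  field_simp

theorem expLoss_sub_le_of_abs_corr_le {v : Fin N → ℝ} {c : ℝ}
    (hc : ∀ k, |∑ i, wt M v i * M i k| ≤ c) (w : Fin N → ℝ) :
    expLoss M v - expLoss M w ≤ c * expLoss M v * l1 (w - v) := by
  have htangent : ∀ i, Real.exp (-(M.mulVec v i)) * (1 - M.mulVec (w - v) i)
      ≤ Real.exp (-(M.mulVec w i)) := by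
    intro i
    have h := Real.add_one_le_exp (M.mulVec v i - M.mulVec w i)
    rw [Matrix.mulVec_sub, Pi.sub_apply]
    calc _ = Real.exp (-(M.mulVec v i)) * (M.mulVec v i - M.mulVec w i + 1) := by ring
      _ ≤ Real.exp (-(M.mulVec v i)) * Real.exp (M.mulVec v i - M.mulVec w i) := by gcongr
      _ = _ := by rw [← Real.exp_add]; ring_nf
  have hlin : expLoss M v - expLoss M w
      ≤ expLoss M v * ∑ k, (∑ i, wt M v i * M i k) * (w - v) k := by
    have hsum : expLoss M v * ∑ k, (∑ i, wt M v i * M i k) * (w - v) k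
        = 1 / (m : ℝ) * ∑ i, Real.exp (-(M.mulVec v i)) * M.mulVec (w - v) i := by
      have hmv : ∀ i, M.mulVec (w - v) i = ∑ k, M i k * (w - v) k := fun _ => rfl
      simp only [hmv, Finset.mul_sum, Finset.sum_mul]
      rw [Finset.sum_comm]
      refine Finset.sum_congr rfl fun i _ => Finset.sum_congr rfl fun k _ => ?_
      calc _ = expLoss M v * wt M v i * (M i k * (w - v) k) := by ring
        _ = _ := by rw [expLoss_mul_wt]; ring
    have hlower : 1 / (m : ℝ) * ∑ i, Real.exp (-(M.mulVec v i)) * (1 - M.mulVec (w - v) i)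
        ≤ expLoss M w := by
      unfold expLoss
      gcongr with i
      exact htangent i
    simp only [mul_sub, mul_one, Finset.sum_sub_distrib] at hlower
    rw [hsum, expLoss]
    linarith
  have hholder : ∑ k, (∑ i, wt M v i * M i k) * (w - v) k ≤ c * l1 (w - v) := by
    rw [l1, Finset.mul_sum]
    refine Finset.sum_le_sum fun k _ => ?_
    calc _ ≤ |(∑ i, wt M v i * M i k) * (w - v) k| := le_abs_self _
      _ ≤ c * |(w - v) k| := by rw [abs_mul]; gcongr; exact hc k
  have hL : 0 ≤ expLoss M v := by unfold expLoss; positivity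
  calc expLoss M v - expLoss M w ≤ expLoss M v * ∑ k, (∑ i, wt M v i * M i k) * (w - v) k := hlin
    _ ≤ expLoss M v * (c * l1 (w - v)) := by gcongr
    _ = c * expLoss M v * l1 (w - v) := by ring

end ExpLoss

section AdaBoost
variable {m N : ℕ} {M : Matrix (Fin m) (Fin N) ℝ} {lam : ℕ → Fin N → ℝ} {j : ℕ → Fin N}
  {r : ℕ → ℝ}

theorem expLoss_antitone_of_drop (hm : 0 < m)
    (hdrop : ∀ t, expLoss M (lam (t + 1)) ≤ expLoss M (lam t) * √(1 - r t ^ 2)) :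
    Antitone fun t => expLoss M (lam t) :=
  antitone_nat_of_succ_le fun t => (hdrop t).trans <| mul_le_of_le_one_right
    (expLoss_pos hm _).le (Real.sqrt_le_one.mpr (by nlinarith [sq_nonneg (r t)]))

theorem abs_lt_one_of_drop (hm : 0 < m)
    (hdrop : ∀ t, expLoss M (lam (t + 1)) ≤ expLoss M (lam t) * √(1 - r t ^ 2)) (t : ℕ) :
    |r t| < 1 := by
  have h := (expLoss_pos hm (lam (t + 1))).trans_le (hdrop t)
  have := Real.sqrt_pos.mp (pos_of_mul_pos_right h (expLoss_pos hm _).le)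
  rw [← sq_lt_one_iff_abs_lt_one]
  linarith

namespace IsAdaBoost

theorem expLoss_le_one (hAda : IsAdaBoost M lam j r) (hm : 0 < m)
    (hdrop : ∀ t, expLoss M (lam (t + 1)) ≤ expLoss M (lam t) * √(1 - r t ^ 2)) (t : ℕ) :
    expLoss M (lam t) ≤ 1 := by
  simpa [hAda.1, expLoss_zero hm] using expLoss_antitone_of_drop hm hdrop (Nat.zero_le t)

theorem gap_le (hAda : IsAdaBoost M lam j r) (w : Fin N → ℝ) (t : ℕ) :
    expLoss M (lam t) - expLoss M w ≤ |r t| * expLoss M (lam t) * l1 (w - lam t) :=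
  expLoss_sub_le_of_abs_corr_le (fun k => (hAda.2 t).2.1 ▸ (hAda.2 t).1 k) w

theorem l1_sub_succ_le (hAda : IsAdaBoost M lam j r) (w : Fin N → ℝ) {t : ℕ} (hr : |r t| < 1) :
    l1 (w - lam (t + 1)) ≤ l1 (w - lam t) + |r t| / (1 - r t ^ 2) := by
  rw [(hAda.2 t).2.2, ← sub_sub]
  refine (l1_sub_le _ _).trans ?_
  rw [l1_single, abs_mul, abs_of_pos (by norm_num : (0:ℝ) < 1 / 2)]
  have := abs_log_one_add_div_one_sub_le hr
  linarith [show 2 * |r t| / (1 - r t ^ 2) = 2 * (|r t| / (1 - r t ^ 2)) by ring]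

theorem potential_succ_le (hAda : IsAdaBoost M lam j r) (hm : 0 < m)
    (hdrop : ∀ t, expLoss M (lam (t + 1)) ≤ expLoss M (lam t) * √(1 - r t ^ 2))
    (w : Fin N → ℝ) {t : ℕ} (hgap : expLoss M w < expLoss M (lam (t + 1))) :
    l1 (w - lam (t + 1)) * (expLoss M (lam (t + 1)) - expLoss M w) ^ 2
      ≤ l1 (w - lam t) * (expLoss M (lam t) - expLoss M w) ^ 2 := by
  have hr := abs_lt_one_of_drop hm hdrop t
  refine mul_sq_gap_le_of_drop (abs_nonneg _) hr (expLoss_pos hm w).le hgap ?_ (hAda.gap_le w t) ?_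
  · rw [sq_abs]; exact hdrop t
  · rw [sq_abs]; exact hAda.l1_sub_succ_le w hr

theorem gap_sq_le (hAda : IsAdaBoost M lam j r) (hm : 0 < m)
    (hdrop : ∀ t, expLoss M (lam (t + 1)) ≤ expLoss M (lam t) * √(1 - r t ^ 2))
    (w : Fin N → ℝ) {t : ℕ} (hgap : expLoss M w ≤ expLoss M (lam t)) :
    (expLoss M (lam t) - expLoss M w) ^ 2
      ≤ 2 * l1 (w - lam t) ^ 2 * (expLoss M (lam t) - expLoss M (lam (t + 1))) :=
  sq_gap_le_of_drop (abs_nonneg _) (abs_lt_one_of_drop hm hdrop t).le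
    (hAda.expLoss_le_one hm hdrop t) (expLoss_pos hm w).le hgap
    (by rw [sq_abs]; exact hdrop t) (hAda.gap_le w t)

end IsAdaBoost

end AdaBoost

/-- For any reference vector `λ*` and any `ε > 0`, AdaBoost achieves loss at
most `L(λ*) + ε` within `13·‖λ*‖₁⁶·ε⁻⁵` rounds. -/
theorem adaboost_convergence_to_reference {m N : ℕ} (hm : 0 < m)
    (M : Matrix (Fin m) (Fin N) ℝ) (hM : ∀ i j, |M i j| ≤ 1)
    (lam : ℕ → Fin N → ℝ) (j : ℕ → Fin N) (r : ℕ → ℝ)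
    (hAda : IsAdaBoost M lam j r)
    (hdrop : ∀ t : ℕ,
      expLoss M (lam (t + 1)) ≤ expLoss M (lam t) * Real.sqrt (1 - r t ^ 2))
    (lamStar : Fin N → ℝ) (ε : ℝ) (hε : 0 < ε)
    (t : ℕ) (ht : 13 * l1 lamStar ^ 6 / ε ^ 5 ≤ (t : ℝ)) :
    expLoss M (lam t) ≤ expLoss M lamStar + ε := by
  by_contra! hfar
  have hgap : ∀ s ≤ t, ε < expLoss M (lam s) - expLoss M lamStar := fun s hs => by
    linarith [expLoss_antitone_of_drop hm hdrop hs]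
  have hinit : expLoss M (lam 0) - expLoss M lamStar ≤ l1 (lamStar - lam 0) := by
    rw [hAda.1, expLoss_zero hm, sub_zero]
    linarith [one_sub_l1_le_expLoss hm hM lamStar]
  have hrate := mul_pow_five_le_of_potential
    (R := fun s => expLoss M (lam s) - expLoss M lamStar) (b := fun s => l1 (lamStar - lam s))
    (fun s hs => hε.trans (hgap s hs)) (fun s => l1_nonneg _) hinit
    (fun s hs => hAda.potential_succ_le hm hdrop lamStar (by linarith [hgap (s + 1) hs]))
    (fun s hs => by
      rw [sub_sub_sub_cancel_right]
      exact hAda.gap_sq_le hm hdrop lamStar (by linarith [hgap s hs.le]))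
  have hB : ε < l1 (lamStar - lam 0) := (hgap 0 (Nat.zero_le t)).trans_le hinit
  simp only [hAda.1, sub_zero] at hrate hB
  have hεt : (t : ℝ) * ε ^ 5 ≤ t * (expLoss M (lam t) - expLoss M lamStar) ^ 5 := by
    gcongr; exact (hgap t le_rfl).le
  rw [div_le_iff₀ (by positivity)] at ht
  linarith [pow_pos (hε.trans hB) 6]
end

section
/- Let ν > 0 and let M be the 4×2 matrix with rows (−1, +1), (+1, −1), (−1+ν, +1), (+1, −1+ν). Then for every ε > 0: (a) there exists λ ∈ ℝ² with L(λ) ≤ 1/2 + ε; and (b) every λ ∈ ℝ² with L(λ) ≤ 1/2 + ε satisfies ‖λ‖₁ ≥ 2·ln(1/(2ε))/ν. -/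
/-- The 4×2 feature matrix with rows `(−1,+1)`, `(+1,−1)`, `(−1+ν,+1)`, `(+1,−1+ν)`. -/
noncomputable def Mnu (ν : ℝ) : Matrix (Fin 4) (Fin 2) ℝ :=
  !![-1, 1; 1, -1; -1 + ν, 1; 1, -1 + ν]

/-!
Pairing the first two rows and the last two rows, AM–GM gives
`L(λ) ≥ 1/2 + exp(-ν (λ₀ + λ₁) / 2) / 2`, with equality along the diagonal `λ₀ = λ₁`.
So a loss of `1/2 + ε` forces `λ₀ + λ₁ ≥ 2 log(1/(2ε)) / ν`, and the diagonal point with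
`ν λ₀ = log(1/(2ε))` attains it.
-/

open Real

lemma two_mul_exp_half_add_le_exp_add_exp (x y : ℝ) :
    2 * exp ((x + y) / 2) ≤ exp x + exp y := by
  have hx : exp x = exp (x / 2) ^ 2 := by rw [← exp_nat_mul]; ring_nf
  have hy : exp y = exp (y / 2) ^ 2 := by rw [← exp_nat_mul]; ring_nf
  have hxy : exp ((x + y) / 2) = exp (x / 2) * exp (y / 2) := by rw [← exp_add]; ring_nf
  rw [hx, hy, hxy]
  nlinarith [sq_nonneg (exp (x / 2) - exp (y / 2))]

lemma sum_le_l1 {N : ℕ} (v : Fin N → ℝ) : ∑ j, v j ≤ l1 v :=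
  Finset.sum_le_sum fun j _ => le_abs_self (v j)

lemma expLoss_Mnu (ν : ℝ) (lam : Fin 2 → ℝ) :
    expLoss (Mnu ν) lam = (exp (lam 0 - lam 1) + exp (lam 1 - lam 0)
      + exp ((1 - ν) * lam 0 - lam 1) + exp (-lam 0 + (1 - ν) * lam 1)) / 4 := by
  simp only [expLoss, Mnu, Matrix.mulVec, dotProduct, Fin.sum_univ_two, Fin.sum_univ_four,
    Matrix.of_apply, Matrix.cons_val', Matrix.cons_val_fin_one, Matrix.cons_val_zero,
    Matrix.cons_val_one, Matrix.cons_val, Nat.cast_ofNat]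
  ring_nf

lemma expLoss_Mnu_const (ν t : ℝ) :
    expLoss (Mnu ν) (fun _ => t) = 1 / 2 + exp (-(ν * t)) / 2 := by
  rw [expLoss_Mnu]
  ring_nf
  rw [exp_zero]
  ring

lemma half_add_exp_le_expLoss_Mnu (ν : ℝ) (lam : Fin 2 → ℝ) :
    1 / 2 + exp (-(ν * (lam 0 + lam 1)) / 2) / 2 ≤ expLoss (Mnu ν) lam := by
  have hfirst := two_mul_exp_half_add_le_exp_add_exp (lam 0 - lam 1) (lam 1 - lam 0)
  have hlast := two_mul_exp_half_add_le_exp_add_exp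
    ((1 - ν) * lam 0 - lam 1) (-lam 0 + (1 - ν) * lam 1)
  rw [show (lam 0 - lam 1 + (lam 1 - lam 0)) / 2 = 0 by ring, exp_zero] at hfirst
  rw [show ((1 - ν) * lam 0 - lam 1 + (-lam 0 + (1 - ν) * lam 1)) / 2
    = -(ν * (lam 0 + lam 1)) / 2 by ring] at hlast
  rw [expLoss_Mnu]
  linarith

/-- For the matrix `Mnu ν` with `ν > 0` and any `ε > 0`, a loss of `1/2 + ε`
is achievable, but every combination achieving it has ℓ₁-norm at least `2·ln(1/(2ε))/ν`. -/
theorem norm_lower_bound_nonintegral (ν : ℝ) (hν : 0 < ν) (ε : ℝ) (hε : 0 < ε) :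
    (∃ lam : Fin 2 → ℝ, expLoss (Mnu ν) lam ≤ 1 / 2 + ε) ∧
    ∀ lam : Fin 2 → ℝ, expLoss (Mnu ν) lam ≤ 1 / 2 + ε →
      2 * Real.log (1 / (2 * ε)) / ν ≤ l1 lam := by
  have h2ε : 0 < 2 * ε := by positivity
  have hlog : log (1 / (2 * ε)) = -log (2 * ε) := by rw [one_div, log_inv]
  constructor
  · refine ⟨fun _ => log (1 / (2 * ε)) / ν, (expLoss_Mnu_const _ _).le.trans ?_⟩
    rw [mul_div_cancel₀ _ hν.ne', hlog, neg_neg, exp_log h2ε]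
    linarith
  · intro lam hlam
    have hexp : exp (-(ν * (lam 0 + lam 1)) / 2) ≤ 2 * ε := by
      linarith [half_add_exp_le_expLoss_Mnu ν lam]
    have hsum : -(ν * (lam 0 + lam 1)) / 2 ≤ log (2 * ε) := (le_log_iff_exp_le h2ε).mpr hexp
    have hl1 : lam 0 + lam 1 ≤ l1 lam := by simpa [Fin.sum_univ_two] using sum_le_l1 lam
    rw [hlog, div_le_iff₀ hν]
    nlinarith
end

section
/- Suppose Z ⊆ {1,…,m}, γ > 0, and η† ∈ ℝ^N with ‖η†‖₁ = 1 satisfy (Mη†)_i ≥ γ for all i ∈ Z and (Mη†)_i = 0 for all i ∉ Z. Then in each round t of AdaBoost the edge satisfies δ_t ≥ γ·(∑_{i∈Z} exp(−(Mλ^{t−1})_i))/(∑_{i=1}^m exp(−(Mλ^{t−1})_i)). -/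
open Matrix

lemma wt_nonneg {m N : ℕ} (M : Matrix (Fin m) (Fin N) ℝ) (lam : Fin N → ℝ) (i : Fin m) :
    0 ≤ wt M lam i :=
  div_nonneg (Real.exp_pos _).le (Finset.sum_nonneg fun _ _ => (Real.exp_pos _).le)

lemma sum_wt_eq_div {m N : ℕ} (M : Matrix (Fin m) (Fin N) ℝ) (lam : Fin N → ℝ) (Z : Finset (Fin m)) :
    ∑ i ∈ Z, wt M lam i =
      (∑ i ∈ Z, Real.exp (-(M *ᵥ lam) i)) / ∑ i, Real.exp (-(M *ᵥ lam) i) :=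
  (Finset.sum_div _ _ _).symm

lemma IsAdaBoost.abs_vecMul_wt_le {m N : ℕ} {M : Matrix (Fin m) (Fin N) ℝ}
    {lam : ℕ → Fin N → ℝ} {j : ℕ → Fin N} {r : ℕ → ℝ} (hAda : IsAdaBoost M lam j r)
    (t : ℕ) (j' : Fin N) : |(wt M (lam t) ᵥ* M) j'| ≤ |r t| := by
  obtain ⟨hmax, hr, -⟩ := hAda.2 t
  exact hr ▸ hmax j'

lemma dotProduct_le_l1_mul {N : ℕ} {c : Fin N → ℝ} {C : ℝ} (hc : ∀ j, |c j| ≤ C)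
    (v : Fin N → ℝ) : c ⬝ᵥ v ≤ l1 v * C :=
  calc c ⬝ᵥ v ≤ ∑ j, |c j * v j| := (le_abs_self _).trans (Finset.abs_sum_le_sum_abs _ _)
    _ ≤ ∑ j, |v j| * C := Finset.sum_le_sum fun j _ => by
        rw [abs_mul, mul_comm]
        exact mul_le_mul_of_nonneg_left (hc j) (abs_nonneg _)
    _ = l1 v * C := (Finset.sum_mul _ _ _).symm

lemma mul_sum_le_dotProduct_of_le_on_of_eq_zero_off {ι : Type*} [Fintype ι] {D f : ι → ℝ}
    (hD : ∀ i, 0 ≤ D i) {Z : Finset ι} {γ : ℝ} (hZ : ∀ i ∈ Z, γ ≤ f i)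
    (hZc : ∀ i ∉ Z, f i = 0) : γ * ∑ i ∈ Z, D i ≤ D ⬝ᵥ f :=
  calc γ * ∑ i ∈ Z, D i ≤ ∑ i ∈ Z, D i * f i := by
        rw [Finset.mul_sum]
        exact Finset.sum_le_sum fun i hi => by
          rw [mul_comm]
          exact mul_le_mul_of_nonneg_left (hZ i hi) (hD i)
    _ = D ⬝ᵥ f :=
        Finset.sum_subset (Finset.subset_univ Z) fun i _ hi => by rw [hZc i hi, mul_zero]

theorem adaboost_edge_from_zero_loss_set_general {m N : ℕ}
    (M : Matrix (Fin m) (Fin N) ℝ)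
    (Z : Finset (Fin m)) (γ : ℝ)
    (ηd : Fin N → ℝ) (hηd : l1 ηd = 1)
    (hZ : ∀ i ∈ Z, γ ≤ M.mulVec ηd i)
    (hFc : ∀ i ∉ Z, M.mulVec ηd i = 0)
    (lam : ℕ → Fin N → ℝ) (j : ℕ → Fin N) (r : ℕ → ℝ)
    (hAda : IsAdaBoost M lam j r) (t : ℕ) :
    γ * (∑ i ∈ Z, Real.exp (-(M.mulVec (lam t) i))) /
        (∑ i, Real.exp (-(M.mulVec (lam t) i))) ≤ |r t| := by
  calc γ * (∑ i ∈ Z, Real.exp (-(M.mulVec (lam t) i))) /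
        (∑ i, Real.exp (-(M.mulVec (lam t) i)))
      = γ * ∑ i ∈ Z, wt M (lam t) i := by rw [mul_div_assoc, sum_wt_eq_div]
    _ ≤ wt M (lam t) ⬝ᵥ (M *ᵥ ηd) :=
        mul_sum_le_dotProduct_of_le_on_of_eq_zero_off (wt_nonneg M (lam t)) hZ hFc
    _ = (wt M (lam t) ᵥ* M) ⬝ᵥ ηd := dotProduct_mulVec _ _ _
    _ ≤ l1 ηd * |r t| := dotProduct_le_l1_mul (hAda.abs_vecMul_wt_le t) ηd
    _ = |r t| := by rw [hηd, one_mul]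

/-- If a unit-ℓ₁-norm `η†` has margin at least `γ > 0` on every example of
`Z` and zero margin off `Z`, then in each round `t` of AdaBoost the edge satisfies
`δ_t ≥ γ·(∑_{i∈Z} e^{−(Mλ^{t−1})ᵢ})/(∑_{i=1}^m e^{−(Mλ^{t−1})ᵢ})`. -/
theorem adaboost_edge_from_zero_loss_set {m N : ℕ} (hm : 0 < m)
    (M : Matrix (Fin m) (Fin N) ℝ) (hM : ∀ i j, |M i j| ≤ 1)
    (Z : Finset (Fin m)) (γ : ℝ) (hγ : 0 < γ)
    (ηd : Fin N → ℝ) (hηd : l1 ηd = 1)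
    (hZ : ∀ i ∈ Z, γ ≤ M.mulVec ηd i)
    (hFc : ∀ i ∉ Z, M.mulVec ηd i = 0)
    (lam : ℕ → Fin N → ℝ) (j : ℕ → Fin N) (r : ℕ → ℝ)
    (hAda : IsAdaBoost M lam j r) (t : ℕ) :
    γ * (∑ i ∈ Z, Real.exp (-(M.mulVec (lam t) i))) /
        (∑ i, Real.exp (-(M.mulVec (lam t) i))) ≤ |r t| :=
  adaboost_edge_from_zero_loss_set_general M Z γ ηd hηd hZ hFc lam j r hAda t
end

section
/- Let F ⊆ {1,…,m} be nonempty with M_F (the submatrix of M consisting of the rows in F) not identically zero, let K = inf_{η∈ℝ^N} ∑_{i∈F} exp(−(Mη)_i), and suppose: K is attained by some η* ∈ ℝ^N, and there is μ_max < ∞ such that every η with ∑_{i∈F} exp(−(Mη)_i) ≤ m has (Mη)_i ≤ μ_max for all i ∈ F. Let λ_min² be the smallest positive eigenvalue of M_Fᵀ·M_F and set C₀ = 2·λ_min²·N^{−1}·m^{−1}·e^{−μ_max}. Then for every λ ∈ ℝ^N with K ≤ ∑_{i∈F} exp(−(Mλ)_i) ≤ m, there is a coordinate direction j with |∑_{i∈F}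 exp(−(Mλ)_i)·M_{ij}| / (∑_{i∈F} exp(−(Mλ)_i)) ≥ √(C₀·(∑_{i∈F} exp(−(Mλ)_i) − K)/(∑_{i∈F} exp(−(Mλ)_i))). -/
/-!
Write `ℓ = ℓ_F(λ)` and `g_j = ∑_{i∈F} e^{-(Mλ)_i} M_ij`. Reach the minimal loss from `λ` along
a direction `d` in the row space of `M_F`: then `M_F (λ + d) = M_F η*` and
`λ_min² ‖d‖² ≤ ‖M_F d‖²`. Both `λ` and `λ + d` have loss at most `m`, so their margins on `F` are
at most `μ_max`, and since `t ↦ e^{-t}` is smallest at an endpoint of a segment, Taylor's theorem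
gives `K ≥ ℓ - ⟨g, d⟩ + (e^{-μ_max} / 2) ‖M_F d‖²`. Bounding
`⟨g, d⟩ - (e^{-μ_max} λ_min² / 2) ‖d‖²` by its maximum over all `d` yields
`2 e^{-μ_max} λ_min² (ℓ - K) ≤ ‖g‖² ≤ N max_j g_j²`, and `ℓ ≤ m` turns this into the bound.
-/

/-- The total (unnormalized) exponential loss `∑_{i∈F} exp(−(Mη)ᵢ)` on a set `F` of rows. -/
noncomputable def lossOn {m N : ℕ} (M : Matrix (Fin m) (Fin N) ℝ)
    (F : Finset (Fin m)) (η : Fin N → ℝ) : ℝ :=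
  ∑ i ∈ F, Real.exp (-(M.mulVec η i))

/-- The matrix `M` with all rows outside `F` replaced by zero (so `(restrictRows M F).transpose *
restrictRows M F = M_Fᵀ M_F`). -/
def restrictRows {m N : ℕ} (M : Matrix (Fin m) (Fin N) ℝ) (F : Finset (Fin m)) :
    Matrix (Fin m) (Fin N) ℝ := fun i j => if i ∈ F then M i j else 0

open Matrix Finset Real

theorem Real.exp_mul_one_sub_add_sq_div_two_le_one {x : ℝ} (hx : 0 ≤ x) :
    exp x * (1 - x) + x ^ 2 / 2 ≤ 1 := by
  let f : ℝ → ℝ := fun t => exp t * (1 - t) + t ^ 2 / 2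
  have hf' (t : ℝ) : HasDerivAt f (t * (1 - exp t)) t := by
    refine (((hasDerivAt_exp t).mul ((hasDerivAt_id t).const_sub 1)).add
      ((hasDerivAt_pow 2 t).div_const 2)).congr_deriv ?_
    simp only [id]; ring
  have hanti : AntitoneOn f (Set.Ici 0) := by
    refine antitoneOn_of_hasDerivWithinAt_nonpos (convex_Ici 0) (by fun_prop)
      (fun t _ => (hf' t).hasDerivWithinAt) fun t ht => ?_
    rw [interior_Ici] at ht
    exact mul_nonpos_of_nonneg_of_nonpos (le_of_lt ht) (by linarith [one_le_exp (le_of_lt ht)])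
  simpa [f] using hanti Set.self_mem_Ici (Set.mem_Ici.2 hx) hx

theorem Real.exp_neg_sub_mul_add_mul_sq_le {a x c : ℝ} (ha : c ≤ exp (-a))
    (hax : c ≤ exp (-(a + x))) : exp (-a) - exp (-a) * x + c / 2 * x ^ 2 ≤ exp (-(a + x)) := by
  have hsplit : exp (-(a + x)) = exp (-a) * exp (-x) := by rw [← exp_add]; ring_nf
  rcases le_or_gt x 0 with hx | hx
  · have hq := quadratic_le_exp_of_nonneg (neg_nonneg.2 hx)
    nlinarith [mul_le_mul_of_nonneg_left hq (exp_pos (-a)).le,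
      mul_le_mul_of_nonneg_right ha (sq_nonneg x)]
  · have hb := exp_mul_one_sub_add_sq_div_two_le_one hx.le
    have hinv : exp (-(a + x)) * exp x = exp (-a) := by rw [← exp_add]; ring_nf
    nlinarith [mul_le_mul_of_nonneg_left hb (exp_pos (-(a + x))).le,
      mul_le_mul_of_nonneg_right hax (sq_nonneg x)]

namespace Matrix

variable {n : Type*} [Fintype n]

theorem PosSemidef.exists_mulVec_sub_eq_zero_and_mul_dotProduct_le {A : Matrix n n ℝ}
    (hA : A.PosSemidef) {c : ℝ}
    (hc : ∀ μ : ℝ, 0 < μ → (∃ v : n → ℝ, v ≠ 0 ∧ A *ᵥ v = μ • v) → c ≤ μ) (w : n → ℝ) :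
    ∃ d : n → ℝ, A *ᵥ (w - d) = 0 ∧ c * (d ⬝ᵥ d) ≤ d ⬝ᵥ (A *ᵥ d) := by
  classical
  obtain ⟨b, μ, hb, hμ⟩ : ∃ (b : OrthonormalBasis n ℝ (EuclideanSpace ℝ n)) (μ : n → ℝ),
      (∀ k, A *ᵥ ⇑(b k) = μ k • ⇑(b k)) ∧ ∀ k, 0 ≤ μ k :=
    ⟨_, _, hA.1.mulVec_eigenvectorBasis, hA.eigenvalues_nonneg⟩
  have hmulVec (s : Finset n) (x : n → ℝ) :
      A *ᵥ ⇑(∑ k ∈ s, x k • b k) = ⇑(∑ k ∈ s, (μ k * x k) • b k) := by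
    simp only [WithLp.ofLp_sum, WithLp.ofLp_smul, mulVec_sum, mulVec_smul, hb, smul_smul,
      mul_comm]
  set a : n → ℝ := fun k => b.repr (WithLp.toLp 2 w) k
  set S : Finset n := {k | μ k ≠ 0}
  have hinner (x y : n → ℝ) :
      ⇑(∑ k ∈ S, x k • b k) ⬝ᵥ ⇑(∑ k ∈ S, y k • b k) = ∑ k ∈ S, x k * y k := by
    have h := b.orthonormal.inner_sum x y S
    simp only [conj_trivial] at h
    rw [← h, EuclideanSpace.inner_eq_star_dotProduct, star_trivial, dotProduct_comm]
  refine ⟨⇑(∑ k ∈ S, a k • b k), ?_, ?_⟩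
  · have hker : w - ⇑(∑ k ∈ S, a k • b k) = ⇑(∑ k ∈ Sᶜ, a k • b k) := by
      rw [← WithLp.ofLp_sub, (b.sum_repr (WithLp.toLp 2 w)).symm, ← Finset.sum_compl_add_sum S,
        add_sub_cancel_right]
    rw [hker, hmulVec, Finset.sum_eq_zero fun k hk => ?_]
    · rfl
    · rw [show μ k = 0 by simpa [S] using hk, zero_mul, zero_smul]
  · rw [hmulVec, hinner, hinner, Finset.mul_sum]
    refine Finset.sum_le_sum fun k hk => ?_
    have hμk : c ≤ μ k :=
      hc _ (lt_of_le_of_ne (hμ k) (Ne.symm (by simpa [S] using hk)))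
        ⟨_, fun h => b.orthonormal.ne_zero k (WithLp.ofLp_injective 2 h), hb k⟩
    nlinarith [mul_le_mul_of_nonneg_right hμk (mul_self_nonneg (a k))]

theorem exists_mulVec_eq_and_mul_dotProduct_le {m : Type*} [Fintype m] (B : Matrix m n ℝ)
    {c : ℝ}
    (hc : ∀ μ : ℝ, 0 < μ → (∃ v : n → ℝ, v ≠ 0 ∧ (Bᵀ * B) *ᵥ v = μ • v) → c ≤ μ)
    (w : n → ℝ) :
    ∃ d : n → ℝ, B *ᵥ d = B *ᵥ w ∧ c * (d ⬝ᵥ d) ≤ (B *ᵥ d) ⬝ᵥ (B *ᵥ d) := by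
  have hB : (Bᵀ * B).PosSemidef := by
    simpa only [conjTranspose_eq_transpose_of_trivial] using posSemidef_conjTranspose_mul_self B
  obtain ⟨d, hker, hd⟩ := hB.exists_mulVec_sub_eq_zero_and_mul_dotProduct_le hc w
  have hBker : B *ᵥ (w - d) = 0 := by
    have h : w - d ∈ LinearMap.ker (Bᵀ * B).mulVecLin := hker
    rwa [ker_mulVecLin_transpose_mul_self] at h
  refine ⟨d, (sub_eq_zero.1 (by rwa [← mulVec_sub])).symm, ?_⟩
  rwa [← mulVec_mulVec, dotProduct_mulVec, vecMul_transpose] at hd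

end Matrix

section Loss

variable {m N : ℕ} {M : Matrix (Fin m) (Fin N) ℝ} {F : Finset (Fin m)}

theorem restrictRows_mulVec_of_mem {i : Fin m} (hi : i ∈ F) (v : Fin N → ℝ) :
    (restrictRows M F *ᵥ v) i = (M *ᵥ v) i := by
  simp [mulVec, dotProduct, restrictRows, hi]

theorem restrictRows_mulVec_of_notMem {i : Fin m} (hi : i ∉ F) (v : Fin N → ℝ) :
    (restrictRows M F *ᵥ v) i = 0 := by
  simp [mulVec, dotProduct, restrictRows, hi]

theorem dotProduct_restrictRows_mulVec_self (v : Fin N → ℝ) :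
    (restrictRows M F *ᵥ v) ⬝ᵥ (restrictRows M F *ᵥ v) = ∑ i ∈ F, (M *ᵥ v) i ^ 2 := by
  rw [dotProduct, ← Finset.sum_subset F.subset_univ fun i _ hi => by
    rw [restrictRows_mulVec_of_notMem hi, mul_zero]]
  exact Finset.sum_congr rfl fun i hi => by rw [restrictRows_mulVec_of_mem hi, sq]

theorem lossOn_eq_of_restrictRows_mulVec_eq {x y : Fin N → ℝ}
    (h : restrictRows M F *ᵥ x = restrictRows M F *ᵥ y) : lossOn M F x = lossOn M F y :=
  Finset.sum_congr rfl fun i hi => by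
    rw [← restrictRows_mulVec_of_mem hi, h, restrictRows_mulVec_of_mem hi]

theorem lossOn_sub_add_mul_sum_sq_le_lossOn_add {μ : ℝ} {lam d : Fin N → ℝ}
    (hlam : ∀ i ∈ F, (M *ᵥ lam) i ≤ μ) (hlamd : ∀ i ∈ F, (M *ᵥ (lam + d)) i ≤ μ) :
    lossOn M F lam - ∑ i ∈ F, exp (-(M *ᵥ lam) i) * (M *ᵥ d) i
      + exp (-μ) / 2 * ∑ i ∈ F, (M *ᵥ d) i ^ 2 ≤ lossOn M F (lam + d) := by
  have hterm (i) (hi : i ∈ F) := exp_neg_sub_mul_add_mul_sq_le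
    (exp_le_exp.2 (neg_le_neg (hlam i hi)))
    (by rw [← Pi.add_apply, ← mulVec_add]; exact exp_le_exp.2 (neg_le_neg (hlamd i hi)))
  calc _ = ∑ i ∈ F, (exp (-(M *ᵥ lam) i) - exp (-(M *ᵥ lam) i) * (M *ᵥ d) i
          + exp (-μ) / 2 * (M *ᵥ d) i ^ 2) := by
        rw [lossOn, Finset.mul_sum, ← Finset.sum_sub_distrib, ← Finset.sum_add_distrib]
    _ ≤ ∑ i ∈ F, exp (-((M *ᵥ lam) i + (M *ᵥ d) i)) := Finset.sum_le_sum hterm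
    _ = lossOn M F (lam + d) := by simp only [lossOn, mulVec_add, Pi.add_apply]

theorem sum_exp_neg_mul_mulVec (lam d : Fin N → ℝ) :
    ∑ i ∈ F, exp (-(M *ᵥ lam) i) * (M *ᵥ d) i =
      ∑ j, (∑ i ∈ F, exp (-(M *ᵥ lam) i) * M i j) * d j := by
  simp only [mulVec, dotProduct, Finset.mul_sum, Finset.sum_mul, mul_assoc]
  exact Finset.sum_comm

theorem two_mul_lossOn_sub_lossOn_add_le {μ c : ℝ} (hc : 0 ≤ c) {lam d : Fin N → ℝ}
    (hlam : ∀ i ∈ F, (M *ᵥ lam) i ≤ μ) (hlamd : ∀ i ∈ F, (M *ᵥ (lam + d)) i ≤ μ)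
    (hd : c * (d ⬝ᵥ d) ≤ ∑ i ∈ F, (M *ᵥ d) i ^ 2) :
    2 * (exp (-μ) * c) * (lossOn M F lam - lossOn M F (lam + d)) ≤
      ∑ j, (∑ i ∈ F, exp (-(M *ᵥ lam) i) * M i j) ^ 2 := by
  set κ := exp (-μ) * c
  have hκ : 0 ≤ κ := by positivity
  set g : Fin N → ℝ := fun j => ∑ i ∈ F, exp (-(M *ᵥ lam) i) * M i j
  have hloss := lossOn_sub_add_mul_sum_sq_le_lossOn_add hlam hlamd
  rw [sum_exp_neg_mul_mulVec] at hloss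
  have hamgm : 2 * κ * ∑ j, g j * d j ≤ ∑ j, g j ^ 2 + κ ^ 2 * (d ⬝ᵥ d) := by
    simp only [dotProduct, Finset.mul_sum, ← Finset.sum_add_distrib]
    exact Finset.sum_le_sum fun j _ => by nlinarith [sq_nonneg (g j - κ * d j)]
  nlinarith [mul_le_mul_of_nonneg_left hd (mul_nonneg hκ (exp_pos (-μ)).le)]

end Loss

theorem second_order_edge_bound_general {m N : ℕ}
    (M : Matrix (Fin m) (Fin N) ℝ)
    (F : Finset (Fin m)) (hF : F.Nonempty)
    (hMF : ∃ i ∈ F, ∃ j : Fin N, M i j ≠ 0)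
    (K : ℝ)
    (ηstar : Fin N → ℝ) (hηstar : lossOn M F ηstar = K)
    (μmax : ℝ)
    (hμ : ∀ η : Fin N → ℝ, lossOn M F η ≤ (m : ℝ) → ∀ i ∈ F, M.mulVec η i ≤ μmax)
    (lmin2 : ℝ) (hlpos : 0 < lmin2)
    (hlmin : ∀ μ : ℝ, 0 < μ →
      (∃ v : Fin N → ℝ, v ≠ 0 ∧
        ((restrictRows M F).transpose * restrictRows M F).mulVec v = μ • v) → lmin2 ≤ μ)
    (C₀ : ℝ) (hC₀ : C₀ = 2 * lmin2 * (N : ℝ)⁻¹ * (m : ℝ)⁻¹ * Real.exp (-μmax))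
    (lam : Fin N → ℝ) (hlo : K ≤ lossOn M F lam) (hhi : lossOn M F lam ≤ (m : ℝ)) :
    ∃ j : Fin N,
      Real.sqrt (C₀ * (lossOn M F lam - K) / lossOn M F lam) ≤
        |∑ i ∈ F, Real.exp (-(M.mulVec lam i)) * M i j| / lossOn M F lam := by
  set ℓ := lossOn M F lam
  set g : Fin N → ℝ := fun j => ∑ i ∈ F, exp (-(M *ᵥ lam) i) * M i j
  obtain ⟨-, -, j₁, -⟩ := hMF
  obtain ⟨j, -, hj⟩ := Finset.exists_max_image Finset.univ (fun j => |g j|) ⟨j₁, mem_univ _⟩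
  refine ⟨j, ?_⟩
  obtain ⟨d, hBd, hd⟩ :=
    (restrictRows M F).exists_mulVec_eq_and_mul_dotProduct_le hlmin (ηstar - lam)
  have hKd : lossOn M F (lam + d) = K := hηstar ▸ lossOn_eq_of_restrictRows_mulVec_eq
    (by rw [mulVec_add, hBd, mulVec_sub, add_sub_cancel])
  have hdecrease := two_mul_lossOn_sub_lossOn_add_le hlpos.le (hμ lam hhi)
    (hμ _ (hKd ▸ hlo.trans hhi)) (by rwa [dotProduct_restrictRows_mulVec_self] at hd)
  have hgrad : ∑ j', g j' ^ 2 ≤ N * g j ^ 2 := by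
    simpa using Finset.sum_le_card_nsmul univ (fun j' => g j' ^ 2) (g j ^ 2)
      fun j' _ => sq_le_sq.2 (hj j' (mem_univ _))
  have hℓ : 0 < ℓ := Finset.sum_pos (fun i _ => exp_pos _) hF
  have hN : (0 : ℝ) < N := by exact_mod_cast j₁.pos
  rw [hKd] at hdecrease
  rw [sqrt_le_left (by positivity), div_pow, sq_abs, le_div_iff₀ (by positivity), hC₀]
  calc 2 * lmin2 * (N : ℝ)⁻¹ * (m : ℝ)⁻¹ * exp (-μmax) * (ℓ - K) / ℓ * ℓ ^ 2
      = 2 * (exp (-μmax) * lmin2) * (ℓ - K) * (ℓ / m) / N := by field_simp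
    _ ≤ N * g j ^ 2 * 1 / N := by
        gcongr ?_ * ?_ / _
        · exact hdecrease.trans hgrad
        · exact div_le_one_of_le₀ hhi (hℓ.le.trans hhi)
    _ = g j ^ 2 := by field_simp

/-- under the stated hypotheses (optimal loss `K` on `F` attained, margins
on `F` of bounded-loss vectors bounded by `μ_max`, `λ_min²` the smallest positive
eigenvalue of `M_Fᵀ M_F`, `C₀ = 2λ_min²·N⁻¹·m⁻¹·e^{−μ_max}`), for every `λ` with
`K ≤ ℓ_F(λ) ≤ m` some coordinate direction has edge at least
`√(C₀·(ℓ_F(λ) − K)/ℓ_F(λ))` on `F`. -/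
theorem second_order_edge_bound {m N : ℕ}
    (M : Matrix (Fin m) (Fin N) ℝ) (hM : ∀ i j, |M i j| ≤ 1)
    (F : Finset (Fin m)) (hF : F.Nonempty)
    (hMF : ∃ i ∈ F, ∃ j : Fin N, M i j ≠ 0)
    (K : ℝ) (hK : K = ⨅ η : Fin N → ℝ, lossOn M F η)
    (ηstar : Fin N → ℝ) (hηstar : lossOn M F ηstar = K)
    (μmax : ℝ)
    (hμ : ∀ η : Fin N → ℝ, lossOn M F η ≤ (m : ℝ) → ∀ i ∈ F, M.mulVec η i ≤ μmax)
    (lmin2 : ℝ) (hlpos : 0 < lmin2)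
    (hleig : ∃ v : Fin N → ℝ, v ≠ 0 ∧
      ((restrictRows M F).transpose * restrictRows M F).mulVec v = lmin2 • v)
    (hlmin : ∀ μ : ℝ, 0 < μ →
      (∃ v : Fin N → ℝ, v ≠ 0 ∧
        ((restrictRows M F).transpose * restrictRows M F).mulVec v = μ • v) → lmin2 ≤ μ)
    (C₀ : ℝ) (hC₀ : C₀ = 2 * lmin2 * (N : ℝ)⁻¹ * (m : ℝ)⁻¹ * Real.exp (-μmax))
    (lam : Fin N → ℝ) (hlo : K ≤ lossOn M F lam) (hhi : lossOn M F lam ≤ (m : ℝ)) :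
    ∃ j : Fin N,
      Real.sqrt (C₀ * (lossOn M F lam - K) / lossOn M F lam) ≤
        |∑ i ∈ F, Real.exp (-(M.mulVec lam i)) * M i j| / lossOn M F lam :=
  second_order_edge_bound_general M F hF hMF K ηstar hηstar μmax hμ lmin2 hlpos hlmin C₀ hC₀ lam hlo
    hhi
end

section
/- Let Z ⊆ {1,…,m} and F = {1,…,m} \ Z be the zero-loss and finite-margin sets given by the Decomposition Lemma for the feature matrix M, with F nonempty, and let K = inf_{η∈ℝ^N} ∑_{i∈F} exp(−(Mη)_i). Then there exist constants C₁ > 0 and C₂ > 0 depending only on M (not on θ) such that: for any λ ∈ ℝ^N with ∑_{i=1}^m exp(−(Mλ)_i) = K + θ for some θ > 0, K + θ ≤ m, and ∑_{i∈Z} exp(−(Mλ)_i) < C₁·θ, the maximum coordinate edge δ = max_j |∑_{i=1}^m exp(−(Mλ)_i)·M_{ij}| / (∑_{i=1}^m exp(−(Mλ)_i)) satisfies (K+θ)·√(1−δ²) ≤ K + θ − C₂·θ; in particular, one round of AdaBoost from λ reduces the suboptimality θ by at least C₂·θ. -/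
/-!
Write `F = Zᶜ`, `d = M (η⋆ - λ)` and `S = ∑_{i ∈ F} dᵢ²`. Since the gradient of the loss on `F`
vanishes at its minimizer `η⋆`, smoothness and strong convexity of `exp` on the relevant ranges give
`θ - loss_Z λ ≤ m S` and `e^{-μmax} S ≤ ∑_{i ∈ F} e^{-(Mλ)ᵢ} dᵢ`. By the open mapping theorem `d`
agrees on `F` with `M η` for some `η` with `‖η‖₁ ≤ c √S`, where `c` depends only on `M`; since the
edge bounds the weighted column sums, that sum is at most `(δ (K + θ) + loss_Z λ) c √S`. Once
`loss_Z λ` is a small multiple of `θ` this forces `δ² (K + θ) ≥ κ θ`, and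
`√(1 - δ²) ≤ 1 - δ² / 2` finishes.
-/

open Real Matrix

namespace Real

theorem exp_sub_exp_le_exp_mul_sub (x y : ℝ) : exp x - exp y ≤ exp x * (x - y) := by
  have h := mul_le_mul_of_nonneg_left (add_one_le_exp (y - x)) (exp_pos x).le
  rw [← exp_add, add_sub_cancel] at h
  linarith

theorem exp_mul_sq_le_exp_sub_exp_mul_sub {ν x y : ℝ} (hx : ν ≤ x) (hy : ν ≤ y) :
    exp ν * (x - y) ^ 2 ≤ (exp x - exp y) * (x - y) := by
  wlog hyx : y ≤ x generalizing x y
  · have := this hy hx (le_of_not_ge hyx)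
    linarith
  have hνy : exp ν * (x - y) ≤ exp y * (x - y) :=
    mul_le_mul_of_nonneg_right (exp_le_exp.2 hy) (sub_nonneg.2 hyx)
  nlinarith [exp_sub_exp_le_exp_mul_sub y x, sub_nonneg.2 hyx]

theorem exp_sub_exp_mul_sub_le {w x y : ℝ} (hx : exp x ≤ w) (hy : exp y ≤ w) :
    (exp x - exp y) * (x - y) ≤ w * (x - y) ^ 2 := by
  wlog hyx : y ≤ x generalizing x y
  · have := this hy hx (le_of_not_ge hyx)
    linarith
  have hxy := sub_nonneg.2 hyx
  calc (exp x - exp y) * (x - y) ≤ exp x * (x - y) * (x - y) :=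
        mul_le_mul_of_nonneg_right (exp_sub_exp_le_exp_mul_sub x y) hxy
    _ ≤ w * (x - y) ^ 2 := by nlinarith [mul_nonneg hxy hxy]

theorem exp_sub_exp_sub_exp_mul_le {w x y : ℝ} (hx : exp x ≤ w) (hy : exp y ≤ w) :
    exp x - exp y - exp y * (x - y) ≤ w * (x - y) ^ 2 := by
  linarith [exp_sub_exp_le_exp_mul_sub x y, exp_sub_exp_mul_sub_le hx hy]

end Real

theorem LinearMap.exists_preimage_norm_le_of_finiteDimensional {𝕜 E F : Type*}
    [NontriviallyNormedField 𝕜] [CompleteSpace 𝕜]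
    [NormedAddCommGroup E] [NormedSpace 𝕜 E] [FiniteDimensional 𝕜 E]
    [NormedAddCommGroup F] [NormedSpace 𝕜 F] (T : E →ₗ[𝕜] F) :
    ∃ C > 0, ∀ x, ∃ y, T y = T x ∧ ‖y‖ ≤ C * ‖T x‖ := by
  have : CompleteSpace E := FiniteDimensional.complete 𝕜 E
  have : CompleteSpace (LinearMap.range T) := FiniteDimensional.complete 𝕜 _
  obtain ⟨C, hC, hpre⟩ := ContinuousLinearMap.exists_preimage_norm_le
    (LinearMap.toContinuousLinearMap T.rangeRestrict) T.surjective_rangeRestrict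
  refine ⟨C, hC, fun x => ?_⟩
  obtain ⟨y, hy, hyC⟩ := hpre (T.rangeRestrict x)
  exact ⟨y, congrArg Subtype.val hy, hyC⟩

theorem l1_le_card_mul_norm {N : ℕ} (v : Fin N → ℝ) : l1 v ≤ N * ‖v‖ := by
  calc l1 v = ∑ j, ‖v j‖ := rfl
    _ ≤ ∑ _j : Fin N, ‖v‖ := Finset.sum_le_sum fun j _ => norm_le_pi_norm v j
    _ = N * ‖v‖ := by simp

theorem abs_dotProduct_le_mul_l1 {N : ℕ} {u v : Fin N → ℝ} {B : ℝ} (hu : ∀ j, |u j| ≤ B) :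
    |u ⬝ᵥ v| ≤ B * l1 v := by
  calc |u ⬝ᵥ v| ≤ ∑ j, |u j * v j| := Finset.abs_sum_le_sum_abs _ _
    _ ≤ ∑ j, B * |v j| := Finset.sum_le_sum fun j _ => by
        rw [abs_mul]; exact mul_le_mul_of_nonneg_right (hu j) (abs_nonneg _)
    _ = B * l1 v := (Finset.mul_sum _ _ _).symm

theorem Matrix.exists_mulVec_eq_on_l1_le {m N : ℕ} (M : Matrix (Fin m) (Fin N) ℝ)
    (F : Finset (Fin m)) :
    ∃ c > 0, ∀ (v : Fin N → ℝ) (s : ℝ), 0 ≤ s → (∀ i ∈ F, |(M *ᵥ v) i| ≤ s) →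
      ∃ η, (∀ i ∈ F, (M *ᵥ η) i = (M *ᵥ v) i) ∧ l1 η ≤ c * s := by
  let T := LinearMap.funLeft ℝ ℝ ((↑) : F → Fin m) ∘ₗ M.mulVecLin
  obtain ⟨C, hC, hpre⟩ := T.exists_preimage_norm_le_of_finiteDimensional
  refine ⟨(N + 1) * C, by positivity, fun v s hs hv => ?_⟩
  obtain ⟨η, hTη, hη⟩ := hpre v
  have hTv : ‖T v‖ ≤ s := (pi_norm_le_iff_of_nonneg hs).2 fun i => hv i i.2
  refine ⟨η, fun i hi => congrFun hTη ⟨i, hi⟩, ?_⟩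
  calc l1 η ≤ N * ‖η‖ := l1_le_card_mul_norm η
    _ ≤ (N + 1) * (C * ‖T v‖) := by gcongr; linarith
    _ ≤ (N + 1) * C * s := by rw [mul_assoc]; gcongr

section lossOn

variable {m N : ℕ} (M : Matrix (Fin m) (Fin N) ℝ)

theorem lossOn_nonneg (F : Finset (Fin m)) (η : Fin N → ℝ) : 0 ≤ lossOn M F η :=
  Finset.sum_nonneg fun _ _ => (exp_pos _).le

theorem exp_neg_mulVec_le_lossOn {F : Finset (Fin m)} {i : Fin m} (hi : i ∈ F)
    (η : Fin N → ℝ) : exp (-(M *ᵥ η) i) ≤ lossOn M F η :=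
  Finset.single_le_sum (f := fun i => exp (-(M *ᵥ η) i)) (fun _ _ => (exp_pos _).le) hi

variable {M} {F : Finset (Fin m)} {η₀ : Fin N → ℝ}

theorem sum_exp_mul_mulVec_eq_zero (hmin : ∀ η, lossOn M F η₀ ≤ lossOn M F η)
    (v : Fin N → ℝ) : ∑ i ∈ F, exp (-(M *ᵥ η₀) i) * (M *ᵥ v) i = 0 := by
  have hline : (fun t : ℝ => lossOn M F (η₀ + t • v)) =
      fun t => ∑ i ∈ F, exp (-((M *ᵥ η₀) i + t * (M *ᵥ v) i)) := by
    funext t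
    simp [lossOn, Matrix.mulVec_add, Matrix.mulVec_smul]
  have hderiv : HasDerivAt (fun t : ℝ => lossOn M F (η₀ + t • v))
      (∑ i ∈ F, exp (-((M *ᵥ η₀) i + 0 * (M *ᵥ v) i)) * -(M *ᵥ v) i) 0 := by
    rw [hline]
    exact HasDerivAt.fun_sum fun i _ =>
      (((hasDerivAt_id (0 : ℝ)).mul_const _).const_add _).neg.exp.congr_deriv (by simp)
  have hlocmin : IsLocalMin (fun t : ℝ => lossOn M F (η₀ + t • v)) 0 :=
    Filter.Eventually.of_forall fun t => by simpa using hmin (η₀ + t • v)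
  simpa [Finset.sum_neg_distrib] using hlocmin.hasDerivAt_eq_zero hderiv

theorem mulVec_sub_apply_eq_sub_neg (η₀ lam : Fin N → ℝ) (i : Fin m) :
    (M *ᵥ (η₀ - lam)) i = -(M *ᵥ lam) i - -(M *ᵥ η₀) i := by
  rw [Matrix.mulVec_sub, Pi.sub_apply]; ring

theorem lossOn_sub_le_mul_sum_sq (hmin : ∀ η, lossOn M F η₀ ≤ lossOn M F η)
    {lam : Fin N → ℝ} {w : ℝ} (hlam : lossOn M F lam ≤ w) (hη₀ : lossOn M F η₀ ≤ w) :
    lossOn M F lam - lossOn M F η₀ ≤ w * ∑ i ∈ F, (M *ᵥ (η₀ - lam)) i ^ 2 := by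
  calc lossOn M F lam - lossOn M F η₀
      = ∑ i ∈ F, (exp (-(M *ᵥ lam) i) - exp (-(M *ᵥ η₀) i)
          - exp (-(M *ᵥ η₀) i) * (M *ᵥ (η₀ - lam)) i) := by
        rw [Finset.sum_sub_distrib, Finset.sum_sub_distrib, sum_exp_mul_mulVec_eq_zero hmin,
          sub_zero]
        rfl
    _ ≤ ∑ i ∈ F, w * (M *ᵥ (η₀ - lam)) i ^ 2 := Finset.sum_le_sum fun i hi => by
        rw [mulVec_sub_apply_eq_sub_neg]
        exact exp_sub_exp_sub_exp_mul_le ((exp_neg_mulVec_le_lossOn M hi lam).trans hlam)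
          ((exp_neg_mulVec_le_lossOn M hi η₀).trans hη₀)
    _ = w * ∑ i ∈ F, (M *ᵥ (η₀ - lam)) i ^ 2 := (Finset.mul_sum _ _ _).symm

theorem exp_neg_mul_sum_sq_le (hmin : ∀ η, lossOn M F η₀ ≤ lossOn M F η)
    {lam : Fin N → ℝ} {μ : ℝ} (hlam : ∀ i ∈ F, (M *ᵥ lam) i ≤ μ)
    (hη₀ : ∀ i ∈ F, (M *ᵥ η₀) i ≤ μ) :
    exp (-μ) * ∑ i ∈ F, (M *ᵥ (η₀ - lam)) i ^ 2 ≤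
      ∑ i ∈ F, exp (-(M *ᵥ lam) i) * (M *ᵥ (η₀ - lam)) i := by
  calc exp (-μ) * ∑ i ∈ F, (M *ᵥ (η₀ - lam)) i ^ 2
      = ∑ i ∈ F, exp (-μ) * (M *ᵥ (η₀ - lam)) i ^ 2 := Finset.mul_sum _ _ _
    _ ≤ ∑ i ∈ F, (exp (-(M *ᵥ lam) i) - exp (-(M *ᵥ η₀) i)) * (M *ᵥ (η₀ - lam)) i :=
        Finset.sum_le_sum fun i hi => by
          rw [mulVec_sub_apply_eq_sub_neg]
          exact exp_mul_sq_le_exp_sub_exp_mul_sub (neg_le_neg (hlam i hi))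
            (neg_le_neg (hη₀ i hi))
    _ = ∑ i ∈ F, exp (-(M *ᵥ lam) i) * (M *ᵥ (η₀ - lam)) i := by
        simp only [sub_mul, Finset.sum_sub_distrib, sum_exp_mul_mulVec_eq_zero hmin, sub_zero]

end lossOn

theorem sum_compl_exp_mul_mulVec_le {m N : ℕ} {M : Matrix (Fin m) (Fin N) ℝ}
    (hM : ∀ i j, |M i j| ≤ 1) (Z : Finset (Fin m)) (lam η : Fin N → ℝ) {B : ℝ}
    (hB : ∀ j, |∑ i, exp (-(M *ᵥ lam) i) * M i j| ≤ B) :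
    ∑ i ∈ Zᶜ, exp (-(M *ᵥ lam) i) * (M *ᵥ η) i ≤ (B + lossOn M Z lam) * l1 η := by
  set w : Fin m → ℝ := fun i => exp (-(M *ᵥ lam) i)
  have htotal : |w ⬝ᵥ (M *ᵥ η)| ≤ B * l1 η := by
    rw [dotProduct_mulVec]
    exact abs_dotProduct_le_mul_l1 hB
  have hZ : -(lossOn M Z lam * l1 η) ≤ ∑ i ∈ Z, w i * (M *ᵥ η) i := by
    rw [lossOn, Finset.sum_mul, ← Finset.sum_neg_distrib]
    refine Finset.sum_le_sum fun i _ => ?_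
    have hrow : -(1 * l1 η) ≤ (M *ᵥ η) i := (abs_le.1 (abs_dotProduct_le_mul_l1 (hM i))).1
    nlinarith [exp_pos (-(M *ᵥ lam) i)]
  have hsplit := Finset.sum_add_sum_compl Z fun i => w i * (M *ᵥ η) i
  have : w ⬝ᵥ (M *ᵥ η) = ∑ i, w i * (M *ᵥ η) i := rfl
  linarith [le_abs_self (w ⬝ᵥ (M *ᵥ η))]

theorem exp_neg_mul_sum_sq_le_mul_l1 {m N : ℕ} {M : Matrix (Fin m) (Fin N) ℝ}
    (hM : ∀ i j, |M i j| ≤ 1) {Z : Finset (Fin m)} {η₀ lam η : Fin N → ℝ} {μ B : ℝ}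
    (hmin : ∀ η, lossOn M Zᶜ η₀ ≤ lossOn M Zᶜ η) (hlam : ∀ i ∈ Zᶜ, (M *ᵥ lam) i ≤ μ)
    (hη₀ : ∀ i ∈ Zᶜ, (M *ᵥ η₀) i ≤ μ) (hη : ∀ i ∈ Zᶜ, (M *ᵥ η) i = (M *ᵥ (η₀ - lam)) i)
    (hB : ∀ j, |∑ i, exp (-(M *ᵥ lam) i) * M i j| ≤ B) :
    exp (-μ) * ∑ i ∈ Zᶜ, (M *ᵥ (η₀ - lam)) i ^ 2 ≤ (B + lossOn M Z lam) * l1 η :=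
  calc exp (-μ) * ∑ i ∈ Zᶜ, (M *ᵥ (η₀ - lam)) i ^ 2
      ≤ ∑ i ∈ Zᶜ, exp (-(M *ᵥ lam) i) * (M *ᵥ (η₀ - lam)) i :=
        exp_neg_mul_sum_sq_le hmin hlam hη₀
    _ = ∑ i ∈ Zᶜ, exp (-(M *ᵥ lam) i) * (M *ᵥ η) i :=
        Finset.sum_congr rfl fun i hi => by rw [hη i hi]
    _ ≤ (B + lossOn M Z lam) * l1 η := sum_compl_exp_mul_mulVec_le hM Z lam η hB

theorem mul_sqrt_one_sub_sq_le {W θ δ C : ℝ} (hθ : 0 ≤ θ) (hθW : θ ≤ W) (hC : C ≤ 1)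
    (h : 2 * C * θ ≤ δ ^ 2 * W) : W * √(1 - δ ^ 2) ≤ W - C * θ := by
  have hW : 0 ≤ W := hθ.trans hθW
  have hpos : 0 ≤ W - C * θ := by nlinarith
  calc W * √(1 - δ ^ 2) = √(W ^ 2 * (1 - δ ^ 2)) := by rw [sqrt_mul (sq_nonneg W), sqrt_sq hW]
    _ ≤ √((W - C * θ) ^ 2) :=
        sqrt_le_sqrt (by nlinarith [mul_le_mul_of_nonneg_left h hW, sq_nonneg (C * θ)])
    _ = W - C * θ := sqrt_sq hpos

theorem div_mul_le_sq_mul_of_gap_of_edge {m c E W θ δ S L : ℝ} (hc : 0 < c) (hE : 0 < E)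
    (hθ : 0 < θ) (hθW : θ ≤ W) (hWm : W ≤ m) (hL : L ≤ min (1 / 2) (E / (4 * c * m)) * θ)
    (hgap : θ - L ≤ m * S) (hedge : E * S ≤ (δ * W + L) * (c * √S)) :
    E ^ 2 / (8 * m ^ 2 * c ^ 2) * θ ≤ δ ^ 2 * W := by
  have hm : 0 < m := by linarith
  have hL₁ : L ≤ θ / 2 := by
    linarith [mul_le_mul_of_nonneg_right (min_le_left (1 / 2 : ℝ) (E / (4 * c * m))) hθ.le]
  have hL₂ : L ≤ E / (4 * c * m) * θ :=
    hL.trans (mul_le_mul_of_nonneg_right (min_le_right _ _) hθ.le)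
  have hS : 0 < S := by nlinarith
  obtain ⟨s, hs, rfl⟩ : ∃ s, 0 < s ∧ S = s ^ 2 :=
    ⟨√S, sqrt_pos.2 hS, (sq_sqrt hS.le).symm⟩
  rw [sqrt_sq hs.le] at hedge
  have hθs : θ ≤ 2 * m * s := le_of_sq_le_sq (by nlinarith) (by nlinarith)
  have hcL : c * L ≤ E * s / 2 :=
    calc c * L ≤ c * (E / (4 * c * m) * (2 * m * s)) := by gcongr; exact hL₂.trans (by gcongr)
      _ = E * s / 2 := by field_simp; ring
  have hEs : E * s ≤ 2 * c * δ * W := by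
    have hEss : E * s * s ≤ c * (δ * W + L) * s := by linarith
    nlinarith [le_of_mul_le_mul_right hEss hs]
  have hEs2 : (E * s) ^ 2 ≤ (2 * c * δ * W) ^ 2 := pow_le_pow_left₀ (by positivity) hEs 2
  rw [div_mul_eq_mul_div, div_le_iff₀ (by positivity)]
  have hW : 0 ≤ c ^ 2 * δ ^ 2 * W := mul_nonneg (by positivity) (hθ.le.trans hθW)
  nlinarith [mul_le_mul_of_nonneg_left hWm hW]

theorem progress_from_finite_margin_set_general {m N : ℕ}
    (M : Matrix (Fin m) (Fin N) ℝ) (hM : ∀ i j, |M i j| ≤ 1)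
    (Z : Finset (Fin m)) (hFne : (Zᶜ : Finset (Fin m)).Nonempty)
    (ηstar : Fin N → ℝ) (hηstar : lossOn M Zᶜ ηstar = ⨅ η : Fin N → ℝ, lossOn M Zᶜ η)
    (μmax : ℝ)
    (hμ : ∀ η : Fin N → ℝ, lossOn M Zᶜ η ≤ (m : ℝ) → ∀ i ∈ Zᶜ, M.mulVec η i ≤ μmax)
    (K : ℝ) (hK : K = ⨅ η : Fin N → ℝ, lossOn M Zᶜ η) :
    ∃ C₁ C₂ : ℝ, 0 < C₁ ∧ 0 < C₂ ∧
      ∀ (lam : Fin N → ℝ) (θ : ℝ), 0 < θ →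
        lossOn M Finset.univ lam = K + θ → K + θ ≤ (m : ℝ) →
        lossOn M Z lam < C₁ * θ →
        ∀ δ : ℝ,
          ((∃ j : Fin N, δ = |∑ i, Real.exp (-(M.mulVec lam i)) * M i j| /
              (∑ i, Real.exp (-(M.mulVec lam i)))) ∧
            ∀ j : Fin N, |∑ i, Real.exp (-(M.mulVec lam i)) * M i j| /
              (∑ i, Real.exp (-(M.mulVec lam i))) ≤ δ) →
          (K + θ) * Real.sqrt (1 - δ ^ 2) ≤ K + θ - C₂ * θ := by
  obtain ⟨c, hc, hpre⟩ := M.exists_mulVec_eq_on_l1_le Zᶜ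
  have hm : (0 : ℝ) < m := by obtain ⟨i, -⟩ := hFne; exact_mod_cast i.pos
  have hmin : ∀ η, lossOn M Zᶜ ηstar ≤ lossOn M Zᶜ η := fun η =>
    hηstar ▸ ciInf_le ⟨0, Set.forall_mem_range.2 (lossOn_nonneg M Zᶜ)⟩ η
  have hKη : lossOn M Zᶜ ηstar = K := hηstar.trans hK.symm
  have hK0 : 0 ≤ K := hKη ▸ lossOn_nonneg M Zᶜ ηstar
  set E := exp (-μmax)
  refine ⟨min (1 / 2) (E / (4 * c * m)), min (E ^ 2 / (8 * m ^ 2 * c ^ 2) / 2) 1,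
    by positivity, by positivity, fun lam θ hθ hlam hWm hZ δ ⟨⟨j, hj⟩, hδ⟩ => ?_⟩
  have hW : 0 < K + θ := by linarith
  have hδ0 : 0 ≤ δ := hj ▸ by positivity
  have hsplit : lossOn M Z lam + lossOn M Zᶜ lam = K + θ :=
    (Finset.sum_add_sum_compl Z _).trans hlam
  set S := ∑ i ∈ Zᶜ, (M *ᵥ (ηstar - lam)) i ^ 2
  obtain ⟨η, hηeq, hηl1⟩ := hpre (ηstar - lam) √S (sqrt_nonneg S) fun i hi =>
    abs_le_sqrt (Finset.single_le_sum (fun k _ => sq_nonneg ((M *ᵥ (ηstar - lam)) k)) hi)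
  have hgap : lossOn M Zᶜ lam - K ≤ m * S := hKη ▸
    lossOn_sub_le_mul_sum_sq hmin (by linarith [lossOn_nonneg M Z lam]) (by linarith)
  have hedge : ∀ j, |∑ i, exp (-(M *ᵥ lam) i) * M i j| ≤ δ * (K + θ) := fun j =>
    (div_le_iff₀ hW).1 (hlam ▸ hδ j)
  have hconv : E * S ≤ (δ * (K + θ) + lossOn M Z lam) * (c * √S) :=
    (exp_neg_mul_sum_sq_le_mul_l1 hM hmin (hμ lam (by linarith [lossOn_nonneg M Z lam]))
      (hμ ηstar (by linarith)) hηeq hedge).trans <| mul_le_mul_of_nonneg_left hηl1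
        (add_nonneg (mul_nonneg hδ0 hW.le) (lossOn_nonneg M Z lam))
  have hκ := div_mul_le_sq_mul_of_gap_of_edge hc (exp_pos _) hθ (by linarith) hWm hZ.le
    (by linarith) hconv
  exact mul_sqrt_one_sub_sq_le hθ.le (by linarith) (min_le_right _ _)
    (by nlinarith [min_le_left (E ^ 2 / (8 * m ^ 2 * c ^ 2) / 2) 1])

/-- Let `Z` and `F = Zᶜ` be the zero-loss and finite-margin sets given by
the Decomposition Lemma (whose three items appear here as hypotheses), with `F` nonempty,
and `K` the optimal loss on `F`.  Then there are constants `C₁, C₂ > 0` depending only on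
`M` such that whenever the total loss of `λ` is `K + θ` with `0 < θ`, `K + θ ≤ m`, and the
loss on `Z` is less than `C₁·θ`, the maximum coordinate edge `δ` satisfies
`(K+θ)·√(1−δ²) ≤ K + θ − C₂·θ`. -/
theorem progress_from_finite_margin_set {m N : ℕ}
    (M : Matrix (Fin m) (Fin N) ℝ) (hM : ∀ i j, |M i j| ≤ 1)
    (Z : Finset (Fin m)) (hFne : (Zᶜ : Finset (Fin m)).Nonempty)
    (γ : ℝ) (hγ : 0 < γ) (ηd : Fin N → ℝ) (hηd : l1 ηd = 1)
    (hZ : ∀ i ∈ Z, γ ≤ M.mulVec ηd i) (hFc : ∀ i ∈ Zᶜ, M.mulVec ηd i = 0)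
    (ηstar : Fin N → ℝ) (hηstar : lossOn M Zᶜ ηstar = ⨅ η : Fin N → ℝ, lossOn M Zᶜ η)
    (μmax : ℝ)
    (hμ : ∀ η : Fin N → ℝ, lossOn M Zᶜ η ≤ (m : ℝ) → ∀ i ∈ Zᶜ, M.mulVec η i ≤ μmax)
    (K : ℝ) (hK : K = ⨅ η : Fin N → ℝ, lossOn M Zᶜ η) :
    ∃ C₁ C₂ : ℝ, 0 < C₁ ∧ 0 < C₂ ∧
      ∀ (lam : Fin N → ℝ) (θ : ℝ), 0 < θ →
        lossOn M Finset.univ lam = K + θ → K + θ ≤ (m : ℝ) →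
        lossOn M Z lam < C₁ * θ →
        ∀ δ : ℝ,
          ((∃ j : Fin N, δ = |∑ i, Real.exp (-(M.mulVec lam i)) * M i j| /
              (∑ i, Real.exp (-(M.mulVec lam i)))) ∧
            ∀ j : Fin N, |∑ i, Real.exp (-(M.mulVec lam i)) * M i j| /
              (∑ i, Real.exp (-(M.mulVec lam i))) ≤ δ) →
          (K + θ) * Real.sqrt (1 - δ ^ 2) ≤ K + θ - C₂ * θ :=
  progress_from_finite_margin_set_general M hM Z hFne ηstar hηstar μmax hμ K hK
end

section
/- Let M be an m×N real matrix with entries in [−1,1], let Z ⊆ {1,…,m}, and let η₍₁₎, η₍₂₎, … be a sequence of vectors in ℝ^N with ∑_{i=1}^m exp(−(Mη₍t₎)_i) ≤ m for all t, such that for every i ∈ Z, exp(−(Mη₍t₎)_i) → 0 as t → ∞, and for every i ∉ Z, inf_t exp(−(Mη₍t₎)_i) > 0. Then there exists η† ∈ ℝ^N such that (Mη†)_i > 0 for every i ∈ Z and (Mη†)_i = 0 for every i ∉ Z. -/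
/-!
The margins of `η t` off `Z` are bounded: above because the losses there stay above a positive
infimum, below by admissibility. A linear map out of a finite-dimensional space has a continuous
linear right inverse on its range, so there are bounded `ζ t` with the same margins off `Z` as
`η t`. Then `η t - ζ t` has zero margin off `Z`, and positive margin on `Z` once `t` is large,
since there the margins of `η t` tend to `+∞` while those of `ζ t` stay bounded.
-/

open Bornology Filter Matrix Real Set

theorem LinearMap.exists_isBounded_range_comp_eq {ι 𝕜 E F : Type*} [NontriviallyNormedField 𝕜]
    [CompleteSpace 𝕜] [NormedAddCommGroup E] [NormedSpace 𝕜 E] [FiniteDimensional 𝕜 E]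
    [NormedAddCommGroup F] [NormedSpace 𝕜 F] (f : E →ₗ[𝕜] F) (x : ι → E)
    (hx : IsBounded (Set.range (f ∘ x))) :
    ∃ y : ι → E, IsBounded (Set.range y) ∧ f ∘ y = f ∘ x := by
  obtain ⟨s, hs⟩ := f.rangeRestrict.exists_rightInverse_of_surjective f.range_rangeRestrict
  refine ⟨s ∘ f.rangeRestrict ∘ x, ?_, funext fun t => ?_⟩
  · rw [Set.range_comp]
    refine (LinearMap.toContinuousLinearMap s).lipschitz.isBounded_image ?_
    rw [← isBounded_image_subtype_val, ← Set.range_comp]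
    exact hx
  · exact congrArg Subtype.val (LinearMap.congr_fun hs (f.rangeRestrict (x t)))

theorem isBounded_range_of_exp_neg_le_of_pos_iInf {ι : Type*} {a : ι → ℝ} {K : ℝ}
    (hK : ∀ t, exp (-a t) ≤ K) (hc : 0 < ⨅ t, exp (-a t)) : IsBounded (range a) := by
  refine isBounded_iff_bddBelow_bddAbove.2 ⟨⟨-log K, ?_⟩, ⟨-log (⨅ t, exp (-a t)), ?_⟩⟩
  all_goals rintro _ ⟨t, rfl⟩
  · have := (le_log_iff_exp_le ((exp_pos _).trans_le (hK t))).2 (hK t)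
    linarith
  · have hle : ⨅ t, exp (-a t) ≤ exp (-a t) :=
      ciInf_le ⟨0, forall_mem_range.2 fun _ => (exp_pos _).le⟩ t
    have := (log_le_iff_le_exp hc).2 hle
    linarith

theorem positive_margin_vector_from_zero_loss_set_general {m N : ℕ}
    (M : Matrix (Fin m) (Fin N) ℝ)
    (Z : Finset (Fin m)) (η : ℕ → Fin N → ℝ)
    (hadm : ∀ t : ℕ, (∑ i, Real.exp (-(M.mulVec (η t) i))) ≤ (m : ℝ))
    (hZ : ∀ i ∈ Z, Filter.Tendsto (fun t : ℕ => Real.exp (-(M.mulVec (η t) i)))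
      Filter.atTop (nhds 0))
    (hZc : ∀ i ∉ Z, 0 < ⨅ t : ℕ, Real.exp (-(M.mulVec (η t) i))) :
    ∃ ηd : Fin N → ℝ,
      (∀ i ∈ Z, 0 < M.mulVec ηd i) ∧ (∀ i ∉ Z, M.mulVec ηd i = 0) := by
  let f := LinearMap.funLeft ℝ ℝ (Subtype.val : {i // i ∉ Z} → Fin m) ∘ₗ M.mulVecLin
  have hf : IsBounded (range (f ∘ η)) := by
    refine forall_isBounded_image_eval_iff.1 fun i => ?_
    rw [← range_comp]
    refine isBounded_range_of_exp_neg_le_of_pos_iInf (K := m) (fun t => ?_) (hZc i i.2)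
    exact (Finset.single_le_sum (f := fun j => exp (-(M *ᵥ η t) j)) (fun j _ => (exp_pos _).le)
      (Finset.mem_univ _)).trans (hadm t)
  obtain ⟨ζ, hζ, hfζ⟩ := f.exists_isBounded_range_comp_eq η hf
  have hMζ : BddAbove (range fun t => M *ᵥ ζ t) := by
    have := (LinearMap.toContinuousLinearMap M.mulVecLin).lipschitz.isBounded_image hζ
    rw [← range_comp] at this
    exact this.bddAbove
  obtain ⟨t, ht⟩ : ∃ t, ∀ i ∈ Z, (M *ᵥ ζ t) i < (M *ᵥ η t) i := by
    refine ((eventually_all_finset (l := atTop) Z).2 fun i hi => ?_).exists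
    have htend : Tendsto (fun t => (M *ᵥ η t) i) atTop atTop :=
      tendsto_neg_atBot_iff.1 (tendsto_exp_comp_nhds_zero.1 (hZ i hi))
    obtain ⟨D, hD⟩ := hMζ
    filter_upwards [htend.eventually_gt_atTop (D i)] with t ht
    exact (hD ⟨t, rfl⟩ i).trans_lt ht
  refine ⟨η t - ζ t, fun i hi => ?_, fun i hi => ?_⟩
  · simpa [mulVec_sub] using ht i hi
  · simpa [f, mulVec_sub, sub_eq_zero] using congrFun (congrFun hfζ t).symm ⟨i, hi⟩

/-- If a sequence of admissible combinations has zero-loss set `Z` (losses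
tending to `0` on `Z`, bounded away from `0` off `Z`), then some single combination `η†`
achieves strictly positive margin on every example of `Z` and zero margin off `Z`. -/
theorem positive_margin_vector_from_zero_loss_set {m N : ℕ}
    (M : Matrix (Fin m) (Fin N) ℝ) (hM : ∀ i j, |M i j| ≤ 1)
    (Z : Finset (Fin m)) (η : ℕ → Fin N → ℝ)
    (hadm : ∀ t : ℕ, (∑ i, Real.exp (-(M.mulVec (η t) i))) ≤ (m : ℝ))
    (hZ : ∀ i ∈ Z, Filter.Tendsto (fun t : ℕ => Real.exp (-(M.mulVec (η t) i)))
      Filter.atTop (nhds 0))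
    (hZc : ∀ i ∉ Z, 0 < ⨅ t : ℕ, Real.exp (-(M.mulVec (η t) i))) :
    ∃ ηd : Fin N → ℝ,
      (∀ i ∈ Z, 0 < M.mulVec ηd i) ∧ (∀ i ∉ Z, M.mulVec ηd i = 0) :=
  positive_margin_vector_from_zero_loss_set_general M Z η hadm hZ hZc
end

section
/- Suppose u₀, u₁, u₂, … are strictly positive real numbers satisfying u_t − u_{t+1} ≥ c₀·u_t^{1+c₁} for all t, where c₀ ≥ 0 and c₁ ≥ 0 are constants. Then for every t, u_t^{−c₁} − u₀^{−c₁} ≥ c₁·c₀·t. -/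
/-!
The function `s ↦ s ^ (-c₁)` lies above its tangent line at `u t`, whose slope is
`-c₁ * u t ^ (-c₁ - 1)`. Hence each step raises `u ^ (-c₁)` by at least
`c₁ * u t ^ (-c₁ - 1) * (u t - u (t + 1)) ≥ c₁ * c₀`, and these increments add up.
-/

open Real

lemma one_sub_mul_sub_one_le_rpow_neg {z p : ℝ} (hz : 0 < z) (hp : 0 ≤ p) :
    1 - p * (z - 1) ≤ z ^ (-p) :=
  calc 1 - p * (z - 1) ≤ -p * log z + 1 := by nlinarith [log_le_sub_one_of_pos hz]
    _ ≤ exp (-p * log z) := add_one_le_exp _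
    _ = z ^ (-p) := by rw [rpow_def_of_pos hz, mul_comm]

lemma rpow_neg_add_mul_le_rpow_neg {x y c₀ c : ℝ} (hx : 0 < x) (hy : 0 < y) (hc : 0 ≤ c)
    (h : c₀ * x ^ (1 + c) ≤ x - y) : x ^ (-c) + c * c₀ ≤ y ^ (-c) := by
  have hdecr : c₀ * x ^ c ≤ 1 - y / x := by
    rw [rpow_add hx, rpow_one] at h
    rw [le_sub_iff_add_le, add_div' _ _ _ hx.ne', div_le_one hx]
    linear_combination h
  calc x ^ (-c) + c * c₀ = x ^ (-c) * (1 + c * (c₀ * x ^ c)) := by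
        rw [rpow_neg hx.le]; field_simp
    _ ≤ x ^ (-c) * (1 - c * (y / x - 1)) := by
        gcongr
        linarith [mul_le_mul_of_nonneg_left hdecr hc]
    _ ≤ x ^ (-c) * (y / x) ^ (-c) := by
        gcongr
        exact one_sub_mul_sub_one_le_rpow_neg (div_pos hy hx) hc
    _ = y ^ (-c) := by
        rw [div_rpow hy.le hx.le, rpow_neg hx.le, rpow_neg hy.le]; field_simp

theorem recurrence_lemma_general (u : ℕ → ℝ) (hu : ∀ t, 0 < u t)
    (c₀ c₁ : ℝ) (hc₁ : 0 ≤ c₁)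
    (hrec : ∀ t : ℕ, c₀ * u t ^ (1 + c₁) ≤ u t - u (t + 1)) (t : ℕ) :
    c₁ * c₀ * (t : ℝ) ≤ u t ^ (-c₁) - u 0 ^ (-c₁) := by
  induction t with
  | zero => simp
  | succ n ih =>
    have hstep := rpow_neg_add_mul_le_rpow_neg (hu n) (hu (n + 1)) hc₁ (hrec n)
    push_cast
    linarith

/-- If strictly positive reals `u₀, u₁, …` satisfy
`u_t − u_{t+1} ≥ c₀·u_t^{1+c₁}` with `c₀, c₁ ≥ 0`, then for every `t`,
`u_t^{−c₁} − u₀^{−c₁} ≥ c₁·c₀·t`.  (Real powers.) -/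
theorem recurrence_lemma (u : ℕ → ℝ) (hu : ∀ t, 0 < u t)
    (c₀ c₁ : ℝ) (hc₀ : 0 ≤ c₀) (hc₁ : 0 ≤ c₁)
    (hrec : ∀ t : ℕ, c₀ * u t ^ (1 + c₁) ≤ u t - u (t + 1)) (t : ℕ) :
    c₁ * c₀ * (t : ℝ) ≤ u t ^ (-c₁) - u 0 ^ (-c₁) :=
  recurrence_lemma_general u hu c₀ c₁ hc₁ hrec t
end

section
/- If A is an invertible n×n real matrix all of whose entries lie in {−1, 0, +1}, then for every x ∈ ℝⁿ with ‖x‖ = 1 one has ‖Ax‖ ≥ 1/n!; equivalently, ‖Ax‖ ≥ ‖x‖/n! for all x ∈ ℝⁿ, where ‖·‖ is the Euclidean norm. -/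
/-!
Since `A` has integer entries and is invertible, `det A` is a nonzero integer, so `|det A| ≥ 1`.
Each entry of `A⁻¹ = adj A / det A` is then bounded by an `(n-1) × (n-1)` minor of `A`, whose
entries lie in `[-1, 1]`, hence by `(n-1)!`. Cauchy–Schwarz applied to the rows of `A⁻¹` gives
`‖x‖ = ‖A⁻¹ (A x)‖ ≤ n · (n-1)! · ‖A x‖ = n! · ‖A x‖`.
-/

open Finset Matrix

open scoped Nat

namespace Matrix

section Ordered

variable {R : Type*} [CommRing R] [LinearOrder R] [IsStrictOrderedRing R]

theorem abs_adjugate_apply_le {n : ℕ} {A : Matrix (Fin (n + 1)) (Fin (n + 1)) R} {c : R}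
    (hA : ∀ i j, |A i j| ≤ c) (i j : Fin (n + 1)) :
    |adjugate A i j| ≤ n ! * c ^ n := by
  rw [adjugate_fin_succ_eq_det_submatrix, abs_mul, abs_pow, abs_neg, abs_one, one_pow, one_mul]
  simpa using det_le (A := A.submatrix j.succAbove i.succAbove) (abv := AbsoluteValue.abs)
    fun k l => hA _ _

theorem one_le_abs_det_of_forall_eq_intCast {ι : Type*} [Fintype ι] [DecidableEq ι]
    {A : Matrix ι ι R} (hA : ∀ i j, ∃ z : ℤ, A i j = z) (hdet : A.det ≠ 0) : 1 ≤ |A.det| := by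
  choose Z hZ using hA
  obtain rfl : A = (of Z).map ((↑) : ℤ → R) := ext fun i j => hZ i j
  rw [← Int.cast_det] at hdet ⊢
  exact_mod_cast Int.one_le_abs fun h => hdet (by rw [h, Int.cast_zero])

theorem sum_mulVec_sq_le {m n : Type*} [Fintype m] [Fintype n] {B : Matrix m n R} {c : R}
    (hB : ∀ i j, |B i j| ≤ c) (y : n → R) :
    ∑ i, (B *ᵥ y) i ^ 2 ≤ Fintype.card m * (Fintype.card n * c ^ 2) * ∑ j, y j ^ 2 := by
  have hrow : ∀ i, ∑ j, B i j ^ 2 ≤ Fintype.card n * c ^ 2 := fun i => by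
    simpa using sum_le_sum fun j (_ : j ∈ univ) => sq_le_sq.mpr ((hB i j).trans (le_abs_self c))
  calc ∑ i, (B *ᵥ y) i ^ 2 ≤ ∑ i, (∑ j, B i j ^ 2) * ∑ j, y j ^ 2 :=
        sum_le_sum fun i _ => sum_mul_sq_le_sq_mul_sq _ _ _
    _ ≤ ∑ _i : m, Fintype.card n * c ^ 2 * ∑ j, y j ^ 2 :=
        sum_le_sum fun i _ => mul_le_mul_of_nonneg_right (hrow i) (by positivity)
    _ = Fintype.card m * (Fintype.card n * c ^ 2) * ∑ j, y j ^ 2 := by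
        rw [sum_const, card_univ, nsmul_eq_mul]; ring

end Ordered

section OrderedField

variable {K : Type*} [Field K] [LinearOrder K] [IsStrictOrderedRing K]

theorem abs_inv_apply_le {n : ℕ} {A : Matrix (Fin (n + 1)) (Fin (n + 1)) K} {c : K}
    (hA : ∀ i j, |A i j| ≤ c) (hdet : 1 ≤ |A.det|) (i j : Fin (n + 1)) :
    |A⁻¹ i j| ≤ n ! * c ^ n := by
  rw [inv_def, smul_apply, smul_eq_mul, abs_mul, Ring.inverse_eq_inv', abs_inv]
  exact (mul_le_of_le_one_left (abs_nonneg _) (inv_le_one_of_one_le₀ hdet)).trans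
    (abs_adjugate_apply_le hA i j)

end OrderedField

end Matrix

/-- If `A` is an invertible `n×n` real matrix with entries in `{−1,0,+1}`,
then `‖Ax‖ ≥ ‖x‖/n!` for every `x ∈ ℝⁿ` (Euclidean norm). -/
theorem sign_matrix_norm_lower_bound {n : ℕ} (A : Matrix (Fin n) (Fin n) ℝ)
    (hent : ∀ i j, A i j = -1 ∨ A i j = 0 ∨ A i j = 1)
    (hinv : IsUnit A) (x : Fin n → ℝ) :
    Real.sqrt (∑ i, x i ^ 2) / (n.factorial : ℝ) ≤
      Real.sqrt (∑ i, A.mulVec x i ^ 2) := by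
  cases n with
  | zero => simp
  | succ n =>
    have hA_abs : ∀ i j, |A i j| ≤ 1 := fun i j => by
      rcases hent i j with h | h | h <;> simp [h]
    have hA_int : ∀ i j, ∃ z : ℤ, A i j = z := fun i j => by
      rcases hent i j with h | h | h
      exacts [⟨-1, by simp [h]⟩, ⟨0, by simp [h]⟩, ⟨1, by simp [h]⟩]
    have hdet : IsUnit A.det := (isUnit_iff_isUnit_det A).mp hinv
    have hinv_abs : ∀ i j, |A⁻¹ i j| ≤ n ! := by
      simpa using abs_inv_apply_le hA_abs (one_le_abs_det_of_forall_eq_intCast hA_int hdet.ne_zero)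
    have hx : A⁻¹ *ᵥ (A *ᵥ x) = x := by
      rw [mulVec_mulVec, nonsing_inv_mul A hdet, one_mulVec]
    have hsq : ∑ i, x i ^ 2 ≤ ((n + 1)! : ℝ) ^ 2 * ∑ i, (A *ᵥ x) i ^ 2 := by
      have := sum_mulVec_sq_le hinv_abs (A *ᵥ x)
      rw [hx] at this
      refine this.trans_eq ?_
      simp only [Fintype.card_fin, Nat.factorial_succ]
      push_cast
      ring
    rw [div_le_iff₀ (by positivity), mul_comm, ← Real.sqrt_sq (by positivity : (0 : ℝ) ≤ (n + 1)!),
      ← Real.sqrt_mul (by positivity)]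
    exact Real.sqrt_le_sqrt hsq
end
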